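/- arXiv:2106.00513 — 8 statements merged into one kernel-verified Lean document; each statement's English description precedes it below -/
import Mathlib

section
/- If a finite cubic (3-regular) simple graph G admitting a perfect matching has the PMH-property, then every 2-factor of G contains only cycles of even length (i.e., G is E2F). -/
open SimpleGraph


/-- `M` is a perfect matching of `G`, viewed as a set of edges: every vertex lies on
exactly one edge of `M`. -/
def IsPerfMatching {V : Type*} (G : SimpleGraph V) (M : Set (Sym2 V)) : Prop :=
  M ⊆ G.edgeSet ∧ ∀ v : V, ∃! e, e ∈ M ∧ v ∈ e

/-- `F` is (the edge set of) a 2-factor of `G`: a spanning subgraph in which every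
vertex is incident with exactly two edges of `F`. -/
def Is2Factor {V : Type*} (G : SimpleGraph V) (F : Set (Sym2 V)) : Prop :=
  F ⊆ G.edgeSet ∧ ∀ v : V, ∃ e₁ e₂, e₁ ≠ e₂ ∧ e₁ ∈ F ∧ e₂ ∈ F ∧ v ∈ e₁ ∧ v ∈ e₂ ∧
    ∀ e ∈ F, v ∈ e → e = e₁ ∨ e = e₂

/-- Every cycle of `G` all of whose edges lie in `F` has even length. -/
def HasOnlyEvenCycles {V : Type*} (G : SimpleGraph V) (F : Set (Sym2 V)) : Prop :=
  ∀ (x : V) (c : G.Walk x x), c.IsCycle → (∀ e ∈ c.edges, e ∈ F) → Even c.length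

/-- `G` is even-2-factorable: every 2-factor of `G` contains only even cycles. -/
def IsE2F {V : Type*} (G : SimpleGraph V) : Prop :=
  ∀ F, Is2Factor G F → HasOnlyEvenCycles G F

/-- `S` is the edge set of a Hamiltonian cycle of `G`. -/
def IsHamCycleSet {V : Type*} [DecidableEq V] (G : SimpleGraph V) (S : Set (Sym2 V)) : Prop :=
  ∃ (x : V) (c : G.Walk x x), c.IsHamiltonianCycle ∧ S = {e | e ∈ c.edges}

/-- `G` has the Perfect-Matching-Hamiltonian property. -/
def HasPMH {V : Type*} [DecidableEq V] (G : SimpleGraph V) : Prop :=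
  ∀ M, IsPerfMatching G M → ∃ N, IsPerfMatching G N ∧ IsHamCycleSet G (M ∪ N)

/-!
The edges of a cubic graph outside a 2-factor `F` form a perfect matching `M`. The PMH-property
completes `M` by a perfect matching `N` to a Hamiltonian cycle `M ∪ N`; since a cycle meets every
vertex in two distinct edges, `M` and `N` are disjoint, so `N ⊆ F`. Both `F`-edges at a vertex of a
cycle `C` of `F` are edges of `C`, so the `N`-edges of `C` form a perfect matching of `C`, and `C`
has an even number of vertices.
-/

section
variable {V : Type*} {G : SimpleGraph V}

namespace SimpleGraph.Walk.IsCycle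

theorem exists_ne_mem_edges {u v : V} {c : G.Walk u u} (hc : c.IsCycle) (hv : v ∈ c.support) :
    ∃ w₁ w₂, w₁ ≠ w₂ ∧ s(v, w₁) ∈ c.edges ∧ s(v, w₂) ∈ c.edges := by
  obtain ⟨w₁, w₂, hne, hnbr⟩ := Set.ncard_eq_two.mp (hc.ncard_neighborSet_toSubgraph_eq_two hv)
  have hmem : ∀ w ∈ c.toSubgraph.neighborSet v, s(v, w) ∈ c.edges := fun _ hw =>
    c.mem_edges_toSubgraph.mp (Subgraph.mem_edgeSet.mpr hw)
  exact ⟨w₁, w₂, hne, hmem _ (by simp [hnbr]), hmem _ (by simp [hnbr])⟩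

theorem card_support_toFinset [DecidableEq V] {u : V} {c : G.Walk u u} (hc : c.IsCycle) :
    c.support.toFinset.card = c.length := by
  have htail : c.support.toFinset = c.support.tail.toFinset := by
    rw [← c.cons_tail_support, List.toFinset_cons, List.tail_cons,
      Finset.insert_eq_of_mem (List.mem_toFinset.mpr (c.end_mem_tail_support hc.not_nil))]
  rw [htail, List.toFinset_card_of_nodup hc.support_nodup, List.length_tail, c.length_support,
    Nat.add_sub_cancel]

end SimpleGraph.Walk.IsCycle

theorem IsPerfMatching.exists_mk_mem {M : Set (Sym2 V)} (hM : IsPerfMatching G M) (v : V) :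
    ∃ w, s(v, w) ∈ M := by
  obtain ⟨e, ⟨he, hve⟩, -⟩ := hM.2 v
  exact ⟨Sym2.Mem.other hve, (Sym2.other_spec hve).symm ▸ he⟩

theorem IsPerfMatching.eq_of_mk_mem {M : Set (Sym2 V)} (hM : IsPerfMatching G M) {v w w' : V}
    (hw : s(v, w) ∈ M) (hw' : s(v, w') ∈ M) : w = w' :=
  Sym2.congr_right.mp ((hM.2 v).unique ⟨hw, Sym2.mem_mk_left _ _⟩ ⟨hw', Sym2.mem_mk_left _ _⟩)

theorem Is2Factor.isPerfMatching_edgeSet_diff [G.LocallyFinite] (hG : G.IsRegularOfDegree 3)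
    {F : Set (Sym2 V)} (hF : Is2Factor G F) : IsPerfMatching G (G.edgeSet \ F) := by
  classical
  refine ⟨Set.sdiff_subset, fun v => ?_⟩
  obtain ⟨e₁, e₂, hne, he₁, he₂, hv₁, hv₂, hF₂⟩ := hF.2 v
  have hpair : {e₁, e₂} ⊆ G.incidenceFinset v := by
    simp only [Finset.insert_subset_iff, Finset.singleton_subset_iff, mem_incidenceFinset]
    exact ⟨⟨hF.1 he₁, hv₁⟩, hF.1 he₂, hv₂⟩
  have hmem : ∀ e, e ∈ G.edgeSet \ F ∧ v ∈ e ↔ e ∈ G.incidenceFinset v \ {e₁, e₂} := by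
    intro e
    simp only [Set.mem_sdiff, Finset.mem_sdiff, mem_incidenceFinset, Finset.mem_insert,
      Finset.mem_singleton]
    refine ⟨fun ⟨⟨hE, heF⟩, hve⟩ => ⟨⟨hE, hve⟩, ?_⟩, fun ⟨⟨hE, hve⟩, he⟩ => ⟨⟨hE, ?_⟩, hve⟩⟩
    · rintro (rfl | rfl) <;> contradiction
    · exact fun heF => he (hF₂ e heF hve)
  have hcard : (G.incidenceFinset v \ {e₁, e₂}).card = 1 := by
    rw [Finset.card_sdiff_of_subset hpair, card_incidenceFinset_eq_degree, hG v,
      Finset.card_pair hne]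
  obtain ⟨e₃, he₃⟩ := Finset.card_eq_one.mp hcard
  exact ⟨e₃, (hmem e₃).mpr (by simp [he₃]), fun e he => by simpa [he₃] using (hmem e).mp he⟩

theorem IsPerfMatching.disjoint_of_union_eq_edges {M N : Set (Sym2 V)} (hM : IsPerfMatching G M)
    (hN : IsPerfMatching G N) {x : V} {c : G.Walk x x} (hc : c.IsCycle)
    (hMN : M ∪ N = {e | e ∈ c.edges}) : Disjoint M N := by
  refine Set.disjoint_left.mpr fun e heM heN => ?_
  induction e using Sym2.ind with | h a b => ?_
  have hedges : ∀ e, e ∈ M ∪ N ↔ e ∈ c.edges := Set.ext_iff.mp hMN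
  have hab : s(a, b) ∈ c.edges := (hedges _).mp (Or.inl heM)
  obtain ⟨w₁, w₂, hw, hw₁, hw₂⟩ := hc.exists_ne_mem_edges (c.fst_mem_support_of_mem_edges hab)
  have hb : ∀ w, s(a, w) ∈ c.edges → w = b := by
    intro w hw
    rcases (hedges _).mpr hw with hwM | hwN
    · exact hM.eq_of_mk_mem hwM heM
    · exact hN.eq_of_mk_mem hwN heN
  exact hw ((hb _ hw₁).trans (hb _ hw₂).symm)

theorem Is2Factor.mem_edges_of_isCycle {F : Set (Sym2 V)} (hF : Is2Factor G F) {u v : V}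
    {c : G.Walk u u} (hc : c.IsCycle) (hcF : ∀ e ∈ c.edges, e ∈ F) (hv : v ∈ c.support)
    {e : Sym2 V} (he : e ∈ F) (hve : v ∈ e) : e ∈ c.edges := by
  obtain ⟨w₁, w₂, hw, hw₁, hw₂⟩ := hc.exists_ne_mem_edges hv
  obtain ⟨e₁, e₂, -, -, -, -, -, hF₂⟩ := hF.2 v
  have hne : s(v, w₁) ≠ s(v, w₂) := fun h => hw (Sym2.congr_right.mp h)
  rcases hF₂ _ (hcF _ hw₁) (Sym2.mem_mk_left _ _) with h₁ | h₁ <;>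
  rcases hF₂ _ (hcF _ hw₂) (Sym2.mem_mk_left _ _) with h₂ | h₂ <;>
  rcases hF₂ e he hve with rfl | rfl <;> grind

theorem Is2Factor.hasOnlyEvenCycles_of_isPerfMatching_subset {F N : Set (Sym2 V)}
    (hF : Is2Factor G F) (hN : IsPerfMatching G N) (hNF : N ⊆ F) : HasOnlyEvenCycles G F := by
  classical
  intro x c hc hcF
  set H := c.toSubgraph.deleteEdges Nᶜ
  have hmatch : H.IsMatching := by
    intro v hv
    rw [Subgraph.deleteEdges_verts, Walk.verts_toSubgraph] at hv
    obtain ⟨w, hw⟩ := hN.exists_mk_mem v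
    refine ⟨w, ?_, fun w' (hw' : H.Adj v w') => ?_⟩
    · show H.Adj v w
      rw [Subgraph.deleteEdges_adj, ← Subgraph.mem_edgeSet, Walk.mem_edges_toSubgraph]
      exact ⟨hF.mem_edges_of_isCycle hc hcF hv (hNF hw) (Sym2.mem_mk_left _ _), not_not.mpr hw⟩
    · rw [Subgraph.deleteEdges_adj, Set.notMem_compl_iff] at hw'
      exact hN.eq_of_mk_mem hw'.2 hw
  let _ : Fintype H.verts := Fintype.ofFinset c.support.toFinset (fun v => by simp [H])
  simpa [Set.toFinset_ofFinset, hc.card_support_toFinset] using hmatch.even_card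

end

theorem statement1_general {V : Type*} [Fintype V] [DecidableEq V] (G : SimpleGraph V)
    [DecidableRel G.Adj] (hcubic : G.IsRegularOfDegree 3)
    (hpmh : HasPMH G) : IsE2F G := by
  intro F hF
  have hM := hF.isPerfMatching_edgeSet_diff hcubic
  obtain ⟨N, hN, x, c, hc, hMN⟩ := hpmh _ hM
  have hdisj := hM.disjoint_of_union_eq_edges hN hc.isCycle hMN
  have hNF : N ⊆ F := fun e he => by
    by_contra heF
    exact Set.disjoint_right.mp hdisj he ⟨hN.1 he, heF⟩
  exact hF.hasOnlyEvenCycles_of_isPerfMatching_subset hN hNF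

/-- If a finite cubic simple graph `G` admitting a perfect matching has the PMH-property,
then every 2-factor of `G` contains only cycles of even length, i.e. `G` is E2F. -/
theorem statement1 {V : Type*} [Fintype V] [DecidableEq V] (G : SimpleGraph V)
    [DecidableRel G.Adj] (hcubic : G.IsRegularOfDegree 3)
    (hpm : ∃ M, IsPerfMatching G M) (hpmh : HasPMH G) : IsE2F G :=
  statement1_general G hcubic hpmh
end

section
/- Let G be a finite cubic (3-regular) simple graph admitting a perfect matching such that every 2-factor of G is a Hamiltonian cycle of G. Then G has the PMH-property. -/
open SimpleGraph


/-
The complement of a perfect matching `M` of a cubic graph is a 2-factor, hence by hypothesis a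
Hamiltonian cycle `C`. Since `G` has a perfect matching, `C` has even length, so every other
edge of `C` gives a perfect matching `N` disjoint from `M`. Then `M ∪ N` is again a 2-factor,
hence a Hamiltonian cycle.
-/

section Factors

variable {V : Type*} {G : SimpleGraph V}

lemma IsPerfMatching.even_card [Fintype V] {M : Set (Sym2 V)} (hM : IsPerfMatching G M) :
    Even (Fintype.card V) := by
  have hperf : (⊤ : (fromEdgeSet M).Subgraph).IsPerfectMatching := by
    rw [Subgraph.isPerfectMatching_iff]
    intro v
    obtain ⟨e, ⟨heM, hve⟩, huniq⟩ := hM.2 v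
    obtain ⟨w, rfl⟩ := Sym2.mem_iff_exists.mp hve
    refine ⟨w, by simpa [heM] using (hM.1 heM).ne, fun y hy => ?_⟩
    exact Sym2.congr_right.mp (huniq _ ⟨by simpa using hy.1, Sym2.mem_mk_left _ _⟩)
  exact hperf.even_card

lemma is2Factor_of_forall_exists_pair {F : Set (Sym2 V)} (hF : F ⊆ G.edgeSet)
    (h : ∀ v, ∃ e₁ e₂, e₁ ≠ e₂ ∧ ∀ e, e ∈ F ∧ v ∈ e ↔ e = e₁ ∨ e = e₂) : Is2Factor G F := by
  refine ⟨hF, fun v => ?_⟩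
  obtain ⟨e₁, e₂, hne, hiff⟩ := h v
  obtain ⟨he₁F, hve₁⟩ := (hiff e₁).mpr (Or.inl rfl)
  obtain ⟨he₂F, hve₂⟩ := (hiff e₂).mpr (Or.inr rfl)
  exact ⟨e₁, e₂, hne, he₁F, he₂F, hve₁, hve₂, fun e heF hve => (hiff e).mp ⟨heF, hve⟩⟩

lemma IsPerfMatching.is2Factor_compl [Fintype V] [DecidableEq V] [DecidableRel G.Adj]
    (hcubic : G.IsRegularOfDegree 3) {M : Set (Sym2 V)} (hM : IsPerfMatching G M) :
    Is2Factor G (G.edgeSet \ M) := by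
  refine is2Factor_of_forall_exists_pair Set.sdiff_subset fun v => ?_
  obtain ⟨e₀, ⟨he₀M, hve₀⟩, huniq⟩ := hM.2 v
  have he₀ : e₀ ∈ G.incidenceFinset v := (G.mem_incidenceFinset v e₀).mpr ⟨hM.1 he₀M, hve₀⟩
  have hcard : ((G.incidenceFinset v).erase e₀).card = 2 := by
    rw [Finset.card_erase_of_mem he₀, card_incidenceFinset_eq_degree, hcubic v]
  obtain ⟨e₁, e₂, hne, hpair⟩ := Finset.card_eq_two.mp hcard
  refine ⟨e₁, e₂, hne, fun e => ?_⟩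
  have hmem := Finset.ext_iff.mp hpair e
  simp only [Finset.mem_erase, mem_incidenceFinset, Finset.mem_insert, Finset.mem_singleton] at hmem
  rw [← hmem]
  exact ⟨fun ⟨⟨heG, heM⟩, hve⟩ => ⟨fun h => heM (h ▸ he₀M), heG, hve⟩,
    fun ⟨he, heG, hve⟩ => ⟨⟨heG, fun heM => he (huniq e ⟨heM, hve⟩)⟩, hve⟩⟩

lemma IsPerfMatching.is2Factor_union {M N : Set (Sym2 V)} (hM : IsPerfMatching G M)
    (hN : IsPerfMatching G N) (hMN : Disjoint M N) : Is2Factor G (M ∪ N) := by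
  refine is2Factor_of_forall_exists_pair (Set.union_subset hM.1 hN.1) fun v => ?_
  obtain ⟨e₀, ⟨he₀M, hve₀⟩, huniqM⟩ := hM.2 v
  obtain ⟨e₁, ⟨he₁N, hve₁⟩, huniqN⟩ := hN.2 v
  refine ⟨e₀, e₁, fun h => hMN.ne_of_mem he₀M he₁N h, fun e => ⟨?_, ?_⟩⟩
  · rintro ⟨heM | heN, hve⟩
    exacts [Or.inl (huniqM e ⟨heM, hve⟩), Or.inr (huniqN e ⟨heN, hve⟩)]
  · rintro (rfl | rfl)
    exacts [⟨Or.inl he₀M, hve₀⟩, ⟨Or.inr he₁N, hve₁⟩]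

end Factors

namespace SimpleGraph.Walk

variable {V : Type*} {G : SimpleGraph V} {u : V}

def evenEdges {v : V} (c : G.Walk u v) : Set (Sym2 V) :=
  {e | ∃ i < c.length, Even i ∧ e = s(c.getVert i, c.getVert (i + 1))}

lemma evenEdges_subset_edges {v : V} (c : G.Walk u v) : c.evenEdges ⊆ {e | e ∈ c.edges} := by
  rintro _ ⟨i, hi, -, rfl⟩
  exact (mk_mem_edges_iff_exists c).mpr ⟨i, hi, rfl⟩

lemma IsCycle.exists_lt_length_getVert_eq {c : G.Walk u u} (hc : c.IsCycle) {v : V}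
    (hv : v ∈ c.support) : ∃ k < c.length, c.getVert k = v := by
  obtain ⟨k, rfl, hk⟩ := mem_support_iff_exists_getVert.mp hv
  rcases hk.lt_or_eq with hk | rfl
  · exact ⟨k, hk, rfl⟩
  · exact ⟨0, by have := hc.three_le_length; omega, by simp⟩

/-- The vertex at position `k` of an even cycle is covered by the even edge with index
`k - k % 2`; the closing edge has odd index, so no wrap-around occurs. -/
lemma IsCycle.existsUnique_mem_evenEdges {c : G.Walk u u} (hc : c.IsCycle)
    (hev : Even c.length) {v : V} (hv : v ∈ c.support) : ∃! e, e ∈ c.evenEdges ∧ v ∈ e := by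
  obtain ⟨k, hk, rfl⟩ := hc.exists_lt_length_getVert_eq hv
  rw [Nat.even_iff] at hev
  refine ⟨s(c.getVert (k - k % 2), c.getVert (k - k % 2 + 1)),
    ⟨⟨k - k % 2, by omega, Nat.even_iff.mpr (by omega), rfl⟩, ?_⟩, ?_⟩
  · rcases Nat.mod_two_eq_zero_or_one k with h | h
    · rw [h, Nat.sub_zero]; exact Sym2.mem_mk_left _ _
    · rw [show k - k % 2 + 1 = k by omega]; exact Sym2.mem_mk_right _ _
  · rintro _ ⟨⟨j, hj, hje, rfl⟩, hkj⟩
    rw [Nat.even_iff] at hje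
    suffices j = k - k % 2 by rw [this]
    rcases Sym2.mem_iff.mp hkj with h | h <;>
    · have := hc.getVert_injOn' (by simp only [Set.mem_ofPred_eq]; omega)
        (by simp only [Set.mem_ofPred_eq]; omega) h
      omega

lemma IsHamiltonianCycle.isPerfMatching_evenEdges [DecidableEq V] {c : G.Walk u u}
    (hc : c.IsHamiltonianCycle) (hev : Even c.length) : IsPerfMatching G c.evenEdges :=
  ⟨fun _ he => c.edges_subset_edgeSet (c.evenEdges_subset_edges he),
    fun v => hc.isCycle.existsUnique_mem_evenEdges hev (hc.mem_support v)⟩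

end SimpleGraph.Walk

theorem statement2_general {V : Type*} [Fintype V] [DecidableEq V] (G : SimpleGraph V)
    [DecidableRel G.Adj] (hcubic : G.IsRegularOfDegree 3)
    (h2f : ∀ F, Is2Factor G F → IsHamCycleSet G F) : HasPMH G := by
  intro M hM
  obtain ⟨x, c, hc, hcM⟩ := h2f _ (hM.is2Factor_compl hcubic)
  have hev : Even c.length := hc.length_eq ▸ hM.even_card
  have hN := hc.isPerfMatching_evenEdges hev
  have hMN : Disjoint M c.evenEdges := Set.disjoint_right.mpr fun e he =>
    (hcM ▸ c.evenEdges_subset_edges he : e ∈ G.edgeSet \ M).2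
  exact ⟨c.evenEdges, hN, h2f _ (hM.is2Factor_union hN hMN)⟩

/-- Let `G` be a finite cubic simple graph admitting a perfect matching such that every
2-factor of `G` is a Hamiltonian cycle of `G`. Then `G` has the PMH-property. -/
theorem statement2 {V : Type*} [Fintype V] [DecidableEq V] (G : SimpleGraph V)
    [DecidableRel G.Adj] (hcubic : G.IsRegularOfDegree 3)
    (hpm : ∃ M, IsPerfMatching G M)
    (h2f : ∀ F, Is2Factor G F → IsHamCycleSet G F) : HasPMH G :=
  statement2_general G hcubic h2f
end

section
/- For all positive integers r and ℓ with r ≤ ℓ, the papillon graph P_{r,ℓ} contains a cycle of odd length 2r+3; in particular, P_{r,ℓ} is not bipartite. -/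
open SimpleGraph


/-- Vertices of the papillon graph `P_{r,ℓ}`: `(false, i)` is the outer vertex `u_i`
and `(true, i)` is the inner vertex `v_i`, where indices are taken in `ZMod (2(r+ℓ))`
(so the 1-based index `i ∈ {1, …, 2(r+ℓ)}` corresponds to `i mod 2(r+ℓ)`). -/
abbrev PapVert (N : ℕ) : Type := Bool × ZMod N

/-- The outer vertex `u_i` (1-based index `i`). -/
def pu (N : ℕ) (i : ℕ) : PapVert N := (false, (i : ZMod N))

/-- The inner vertex `v_i` (1-based index `i`). -/
def pv (N : ℕ) (i : ℕ) : PapVert N := (true, (i : ZMod N))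

/-- The edge set of the papillon graph `P_{r,ℓ}`: the outer-cycle edges, the spokes,
and the inner-cycle edges. -/
def papillonEdges (r l : ℕ) : Set (Sym2 (PapVert (2 * (r + l)))) :=
  {e | (∃ i, 1 ≤ i ∧ i ≤ 2 * (r + l) - 1 ∧
          e = s(pu (2 * (r + l)) i, pu (2 * (r + l)) (i + 1)))
      ∨ e = s(pu (2 * (r + l)) (2 * (r + l)), pu (2 * (r + l)) 1)
      ∨ (∃ i, 1 ≤ i ∧ i ≤ 2 * (r + l) ∧
          e = s(pu (2 * (r + l)) i, pv (2 * (r + l)) i))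
      ∨ (∃ i, 1 ≤ i ∧ i ≤ r + l ∧
          e = s(pv (2 * (r + l)) (2 * i - 1), pv (2 * (r + l)) (2 * i)))
      ∨ (∃ i, 1 ≤ i ∧ i ≤ r + l - 1 ∧ i ≠ min r l ∧
          e = s(pv (2 * (r + l)) (2 * i - 1), pv (2 * (r + l)) (2 * i + 2)))
      ∨ e = s(pv (2 * (r + l)) 2, pv (2 * (r + l)) (2 * min r l + 2))
      ∨ e = s(pv (2 * (r + l)) (2 * min r l - 1), pv (2 * (r + l)) (2 * (r + l) - 1))}

/-- The papillon graph `P_{r,ℓ}`. -/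
def papillon (r l : ℕ) : SimpleGraph (PapVert (2 * (r + l))) :=
  SimpleGraph.fromEdgeSet (papillonEdges r l)

/-! The outer path `u₂ u₃ ⋯ u_{2r+2}` has `2r` edges; the spokes at its two ends together with
the inner edge `v₂ v_{2r+2}` (present because `min r ℓ = r`) close it into a cycle of length
`2r + 3`. A closed walk of odd length rules out a proper 2-colouring. -/

namespace SimpleGraph

lemma cycleGraph_isContained_of_adj_add_one {V : Type*} {G : SimpleGraph V} {n : ℕ} [NeZero n]
    (f : Fin n → V) (hf : Function.Injective f) (hadj : ∀ i, G.Adj (f i) (f (i + 1))) :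
    cycleGraph n ⊑ G := by
  refine ⟨⟨⟨f, fun {u v} huv => ?_⟩, hf⟩⟩
  have key : ∀ a b : Fin n, (b - a).val = 1 → G.Adj (f a) (f b) := by
    intro a b h
    have hn : 1 < n := h ▸ (b - a).isLt
    have : b = a + 1 := by
      rw [← sub_eq_iff_eq_add', Fin.ext_iff, h, Fin.val_one', Nat.one_mod_eq_one.mpr hn.ne']
    exact this ▸ hadj a
  rcases cycleGraph_adj'.mp huv with h | h
  · exact (key v u h).symm
  · exact key u v h

lemma not_colorable_two_of_odd_length {V : Type*} {G : SimpleGraph V} {v : V} (p : G.Walk v v)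
    (hp : Odd p.length) : ¬ G.Colorable 2 := fun h =>
  Nat.not_even_iff_odd.mpr hp (two_colorable_iff_forall_loop_even.mp h v p)

end SimpleGraph

lemma natCast_inj_of_mem_Icc {N a b : ℕ} (ha : a ∈ Set.Icc 1 N) (hb : b ∈ Set.Icc 1 N)
    (h : (a : ZMod N) = b) : a = b := by
  obtain ⟨ha₁, ha₂⟩ := ha
  obtain ⟨hb₁, hb₂⟩ := hb
  exact ((ZMod.natCast_eq_natCast_iff a b N).mp h).eq_of_abs_lt (by rw [abs_lt]; omega)

section Papillon

variable {r l : ℕ}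

lemma papillon_adj_pu_pu_add_one {i : ℕ} (hi : 1 ≤ i) (hiN : i < 2 * (r + l)) :
    (papillon r l).Adj (pu _ i) (pu _ (i + 1)) := by
  refine (fromEdgeSet_adj _).mpr ⟨Or.inl ⟨i, hi, by omega, rfl⟩, fun h => ?_⟩
  have := natCast_inj_of_mem_Icc ⟨by omega, by omega⟩ ⟨by omega, by omega⟩ (congrArg Prod.snd h)
  omega

lemma papillon_adj_pu_pv {i : ℕ} (hi : 1 ≤ i) (hiN : i ≤ 2 * (r + l)) :
    (papillon r l).Adj (pu _ i) (pv _ i) :=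
  (fromEdgeSet_adj _).mpr ⟨Or.inr (Or.inr (Or.inl ⟨i, hi, hiN, rfl⟩)), by simp [pu, pv]⟩

lemma papillon_adj_pv_two (hr : 1 ≤ r) (hrl : r ≤ l) :
    (papillon r l).Adj (pv _ 2) (pv _ (2 * r + 2)) := by
  refine (fromEdgeSet_adj _).mpr ⟨?_, fun h => ?_⟩
  · simp only [papillonEdges, min_eq_left hrl, Set.mem_ofPred_eq, true_or, or_true]
  · have := natCast_inj_of_mem_Icc ⟨by omega, by omega⟩ ⟨by omega, by omega⟩ (congrArg Prod.snd h)
    omega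

def papillonOddCycle (r l : ℕ) (k : Fin (2 * r + 3)) : PapVert (2 * (r + l)) :=
  if k.val ≤ 2 * r then pu _ (k + 2) else if k.val = 2 * r + 1 then pv _ (2 * r + 2) else pv _ 2

lemma papillonOddCycle_injective (hr : 1 ≤ r) (hrl : r ≤ l) :
    Function.Injective (papillonOddCycle r l) := by
  intro a b h
  have ha := a.isLt
  have hb := b.isLt
  unfold papillonOddCycle pu pv at h
  ext
  split_ifs at h <;> simp only [Prod.mk.injEq, Bool.false_eq_true, Bool.true_eq_false,
    false_and, true_and] at h <;> first
    | omega
    | have := natCast_inj_of_mem_Icc ⟨by omega, by omega⟩ ⟨by omega, by omega⟩ h; omega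

lemma papillonOddCycle_adj_add_one (hr : 1 ≤ r) (hrl : r ≤ l) (k : Fin (2 * r + 3)) :
    (papillon r l).Adj (papillonOddCycle r l k) (papillonOddCycle r l (k + 1)) := by
  have hk := k.isLt
  have hs : (k + 1).val = if k.val = 2 * r + 2 then 0 else k.val + 1 := by
    simp [Fin.val_add_one, Fin.ext_iff]
  unfold papillonOddCycle
  rw [hs]
  split_ifs <;> first
    | omega
    | exact papillon_adj_pu_pu_add_one (by omega) (by omega)
    | rw [show k.val = 2 * r by omega]; exact papillon_adj_pu_pv (by omega) (by omega)
    | exact (papillon_adj_pu_pv (by omega) (by omega)).symm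
    | exact (papillon_adj_pv_two hr hrl).symm

lemma cycleGraph_isContained_papillon (hr : 1 ≤ r) (hrl : r ≤ l) :
    cycleGraph (2 * r + 3) ⊑ papillon r l :=
  cycleGraph_isContained_of_adj_add_one _ (papillonOddCycle_injective hr hrl)
    (papillonOddCycle_adj_add_one hr hrl)

end Papillon

/-- For all positive integers `r ≤ ℓ`, the papillon graph `P_{r,ℓ}` contains a cycle of
(odd) length `2r+3`; in particular, `P_{r,ℓ}` is not bipartite (not 2-colourable). -/
theorem statement3 (r l : ℕ) (hr : 1 ≤ r) (hrl : r ≤ l) :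
    (∃ (x : PapVert (2 * (r + l))) (c : (papillon r l).Walk x x),
        c.IsCycle ∧ c.length = 2 * r + 3 ∧ Odd c.length)
      ∧ ¬ (papillon r l).Colorable 2 := by
  obtain ⟨x, c, hc, hlen⟩ :=
    (cycleGraph_isContained_iff (by omega)).mp (cycleGraph_isContained_papillon hr hrl)
  have hodd : Odd c.length := hlen ▸ ⟨r + 1, by ring⟩
  exact ⟨⟨x, c, hc, hlen, hodd⟩, not_colorable_two_of_odd_length c hodd⟩
end

section
/- For all positive integers r and ℓ with r ≤ ℓ, every cycle of odd length in the papillon graph P_{r,ℓ} has length at least 2r+3; consequently, a shortest odd cycle of P_{r,ℓ} has length exactly 2r+3. -/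
open SimpleGraph


/-!
Colour each vertex by the parity of its index, flipped on inner vertices. Every edge of
`P_{r,ℓ}` joins two colours except the two inner edges `v₂ v_{2r+2}` and `v_{2r-1} v_{2r+2ℓ-1}`
where the inner cycle crosses over, so an odd cycle uses exactly one of them. For each of these
two edges there is an integer potential that changes by at most one along every other edge but
jumps by `2r + 2` across it; the rest of the cycle has to make up that jump, so the cycle has at
least `2r + 3` edges. The outer path `u₂ u₃ ⋯ u_{2r+2}` closed up through `v_{2r+2}` and `v₂`
is an odd cycle of exactly this length.
-/

namespace SimpleGraph

variable {V : Type*} {G : SimpleGraph V}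

theorem exists_isCycle_length_eq_of_injOn {n : ℕ} (hn : 3 ≤ n) {f : ℕ → V}
    (hf : Set.InjOn f (Set.Iio n)) (hadj : ∀ k, k + 1 < n → G.Adj (f k) (f (k + 1)))
    (hclose : G.Adj (f (n - 1)) (f 0)) :
    ∃ (v : V) (c : G.Walk v v), c.IsCycle ∧ c.length = n := by
  have adj_of_sub_eq_one : ∀ i j : Fin n, (i - j).val = 1 → G.Adj (f j) (f i) := by
    intro i j h
    rcases le_or_gt j i with hji | hij
    · rw [Fin.sub_val_of_le hji] at h
      simpa [show i.val = j.val + 1 by omega] using hadj j (by omega)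
    · rw [Fin.coe_sub_iff_lt.mpr hij] at h
      simpa [show i.val = 0 by omega, show j.val = n - 1 by omega] using hclose
  refine (cycleGraph_isContained_iff (by omega)).mp ⟨⟨⟨fun i => f i, fun {i j} h => ?_⟩, ?_⟩⟩
  · rcases cycleGraph_adj'.mp h with h | h
    exacts [(adj_of_sub_eq_one i j h).symm, adj_of_sub_eq_one j i h]
  · exact fun i j h => Fin.ext (hf i.isLt j.isLt h)

namespace Walk

theorem abs_sub_le_length {u v : V} (p : G.Walk u v) (H : V → ℤ)
    (hH : ∀ x y, s(x, y) ∈ p.edges → |H x - H y| ≤ 1) : |H u - H v| ≤ p.length := by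
  induction p with
  | nil => simp
  | @cons u w v h q ih =>
    simp only [edges_cons, List.mem_cons, length_cons, Nat.cast_succ] at hH ⊢
    calc |H u - H v| ≤ |H u - H w| + |H w - H v| := abs_sub_le _ _ _
      _ ≤ 1 + q.length := add_le_add (hH u w (.inl rfl)) (ih fun x y h => hH x y (.inr h))
      _ = q.length + 1 := add_comm _ _

theorem IsTrail.exists_walk_of_mem_edges {u x y : V} {c : G.Walk u u} (hc : c.IsTrail)
    (he : s(x, y) ∈ c.edges) :
    ∃ p : G.Walk x y, p.length + 1 = c.length ∧ ∀ e ∈ p.edges, e ∈ c.edges ∧ e ≠ s(x, y) := by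
  have hnd := hc.edges_nodup
  have hadj := c.adj_of_mem_edges he
  rcases (isSubwalk_toWalk_iff_mem_edges hadj).mpr he with ⟨ru, rv, rfl⟩ | ⟨ru, rv, rfl⟩
  · refine ⟨(rv.append ru).reverse, ?_, fun e he' => ?_⟩
    · simp only [length_reverse, length_append, Adj.toWalk, length_cons, length_nil]
      omega
    · simp only [edges_reverse, edges_append, List.mem_reverse, List.mem_append, Adj.toWalk,
        edges_cons, edges_nil, List.nodup_append, List.mem_singleton] at he' hnd ⊢
      grind
  · refine ⟨rv.append ru, ?_, fun e he' => ?_⟩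
    · simp only [length_append, Adj.toWalk, length_cons, length_nil]
      omega
    · simp only [edges_append, List.mem_append, Adj.toWalk, edges_cons, edges_nil,
        List.nodup_append, List.mem_singleton] at he' hnd ⊢
      grind [Sym2.eq_swap]

theorem IsTrail.abs_sub_add_one_le_length {u x y : V} {c : G.Walk u u} (hc : c.IsTrail)
    (H : V → ℤ) (he : s(x, y) ∈ c.edges)
    (hH : ∀ a b, s(a, b) ∈ c.edges → s(a, b) ≠ s(x, y) → |H a - H b| ≤ 1) :
    |H x - H y| + 1 ≤ c.length := by
  obtain ⟨p, hlen, hp⟩ := hc.exists_walk_of_mem_edges he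
  have := p.abs_sub_le_length H fun a b hab => hH a b (hp _ hab).1 (hp _ hab).2
  omega

theorem add_eq_length_add_sum_count [DecidableEq V] {u v : V} (p : G.Walk u v)
    (χ : V → ZMod 2) (S : Finset (Sym2 V))
    (hχ : ∀ x y, G.Adj x y → χ x + χ y = if s(x, y) ∈ S then 0 else 1) :
    χ u + χ v = p.length + ∑ e ∈ S, (p.edges.count e : ZMod 2) := by
  induction p with
  | nil => simp [CharTwo.add_self_eq_zero]
  | @cons u w v h q ih =>
    have hsplit : χ u + χ v = (χ u + χ w) + (χ w + χ v) := by
      rw [← add_assoc, add_assoc (χ u), CharTwo.add_self_eq_zero, add_zero]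
    simp only [edges_cons, List.count_cons, beq_iff_eq, length_cons, Nat.cast_add, Nat.cast_ite,
      Nat.cast_one, Nat.cast_zero, Finset.sum_add_distrib, Finset.sum_ite_eq, hsplit, ih, hχ u w h]
    split_ifs
    · grind
    · ring

end Walk

end SimpleGraph

namespace Papillon

def index (N : ℕ) (x : ZMod N) : ℕ := if x.val = 0 then N else x.val

theorem index_natCast {N i : ℕ} (h₁ : 1 ≤ i) (h₂ : i ≤ N) : index N i = i := by
  have : NeZero N := ⟨by omega⟩
  rcases h₂.lt_or_eq with h | rfl
  · rw [index, ZMod.val_natCast_of_lt h, if_neg (by omega)]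
  · simp [index]

theorem eq_of_natCast_eq {N i j : ℕ} (hi₁ : 1 ≤ i) (hi₂ : i ≤ N) (hj₁ : 1 ≤ j) (hj₂ : j ≤ N)
    (h : (i : ZMod N) = j) : i = j := by
  have := congrArg (index N) h
  rwa [index_natCast hi₁ hi₂, index_natCast hj₁ hj₂] at this

variable {r l : ℕ}

def crossEdge₁ (r l : ℕ) : Sym2 (PapVert (2 * (r + l))) :=
  s(pv (2 * (r + l)) 2, pv (2 * (r + l)) (2 * r + 2))

def crossEdge₂ (r l : ℕ) : Sym2 (PapVert (2 * (r + l))) :=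
  s(pv (2 * (r + l)) (2 * r - 1), pv (2 * (r + l)) (2 * (r + l) - 1))

theorem crossEdge₁_ne_crossEdge₂ (hr : 1 ≤ r) (hrl : r ≤ l) :
    crossEdge₁ r l ≠ crossEdge₂ r l := by
  intro h
  rcases Sym2.eq_iff.mp h with ⟨h', -⟩ | ⟨h', -⟩ <;>
  · have := eq_of_natCast_eq (by omega) (by omega) (by omega) (by omega) (Prod.ext_iff.mp h').2
    omega

theorem adj_cases (hrl : r ≤ l) {P : PapVert (2 * (r + l)) → PapVert (2 * (r + l)) → Prop}
    (symm : ∀ x y, P x y → P y x)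
    (outer : ∀ i, 1 ≤ i → i < 2 * (r + l) → P (pu _ i) (pu _ (i + 1)))
    (wrap : P (pu _ (2 * (r + l))) (pu _ 1))
    (spoke : ∀ i, 1 ≤ i → i ≤ 2 * (r + l) → P (pu _ i) (pv _ i))
    (rung : ∀ j, 1 ≤ j → j ≤ r + l → P (pv _ (2 * j - 1)) (pv _ (2 * j)))
    (skip : ∀ j, 1 ≤ j → j ≤ r + l - 1 → j ≠ r → P (pv _ (2 * j - 1)) (pv _ (2 * j + 2)))
    {x y : PapVert (2 * (r + l))} (h : (papillon r l).Adj x y) :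
    s(x, y) = crossEdge₁ r l ∨ s(x, y) = crossEdge₂ r l ∨ P x y := by
  have of_eq : ∀ {a b}, P a b → s(x, y) = s(a, b) → P x y := by
    intro a b hab he
    rcases Sym2.eq_iff.mp he with ⟨rfl, rfl⟩ | ⟨rfl, rfl⟩
    exacts [hab, symm _ _ hab]
  rw [papillon, fromEdgeSet_adj] at h
  simp only [papillonEdges, Set.mem_ofPred_eq, min_eq_left hrl] at h
  obtain ⟨⟨i, h₁, h₂, he⟩ | he | ⟨i, h₁, h₂, he⟩ | ⟨i, h₁, h₂, he⟩ | ⟨i, h₁, h₂, h₃, he⟩ | he | he,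
    -⟩ := h
  · exact .inr (.inr (of_eq (outer i h₁ (by omega)) he))
  · exact .inr (.inr (of_eq wrap he))
  · exact .inr (.inr (of_eq (spoke i h₁ h₂) he))
  · exact .inr (.inr (of_eq (rung i h₁ h₂) he))
  · exact .inr (.inr (of_eq (skip i h₁ h₂ h₃) he))
  · exact .inl he
  · exact .inr (.inl he)

def parity (x : PapVert (2 * (r + l))) : ZMod 2 :=
  ((cond x.1 1 0 + index _ x.2 : ℕ) : ZMod 2)

theorem parity_add_parity (hr : 1 ≤ r) (hrl : r ≤ l) {x y : PapVert (2 * (r + l))}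
    (h : (papillon r l).Adj x y) :
    parity x + parity y =
      if s(x, y) ∈ ({crossEdge₁ r l, crossEdge₂ r l} : Finset _) then 0 else 1 := by
  split_ifs with hS
  · simp only [Finset.mem_insert, Finset.mem_singleton, crossEdge₁, crossEdge₂] at hS
    rcases hS with he | he <;> rcases Sym2.eq_iff.mp he with ⟨rfl, rfl⟩ | ⟨rfl, rfl⟩ <;>
    · simp (disch := omega) only [parity, pv, index_natCast, cond_true, ← Nat.cast_add]
      rw [ZMod.natCast_eq_zero_iff]
      omega
  · refine ((adj_cases hrl (P := fun x y => parity x + parity y = 1)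
      (fun _ _ h => by rwa [add_comm]) ?_ ?_ ?_ ?_ ?_ h).resolve_left
      (fun he => hS (by simp [he]))).resolve_left (fun he => hS (by simp [he])) <;>
    · intros
      simp (disch := omega) only [parity, pu, pv, index_natCast, cond_true, cond_false,
        ← Nat.cast_add]
      rw [ZMod.natCast_eq_one_iff_odd, Nat.odd_iff]
      omega

-- Up to `±1` on inner vertices, these are the cyclic distances of the index from `2` and
-- from `2r - 1`.
def potential₁ (r l : ℕ) (x : PapVert (2 * (r + l))) : ℤ :=
  let i := index _ x.2
  bif x.1 then
    if i = 2 * r + 2 then 2 * r + 1 else if i = r + l + 2 then r + l - 1 else if i = 1 then 0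
    else if i < r + l + 2 then (i : ℤ) - 3 + 2 * (i % 2 : ℕ)
    else 2 * (r + l) + 3 - i - 2 * (i % 2 : ℕ)
  else if i = 1 then 1 else if i ≤ r + l + 2 then (i : ℤ) - 2 else 2 * (r + l) + 2 - i

def potential₂ (r l : ℕ) (x : PapVert (2 * (r + l))) : ℤ :=
  let i := index _ x.2
  bif x.1 then
    if i = 2 * r - 1 then -1 else if i = 2 * (r + l) - 1 then 2 * r + 1
    else if i = r + l + 2 * r - 1 then r + l - 1
    else if i < 2 * r - 1 then 2 * (r : ℤ) - i - 2 * (i % 2 : ℕ)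
    else if i < r + l + 2 * r - 1 then (i : ℤ) - 2 * r + 2 * (i % 2 : ℕ)
    else 2 * (r + l) + 2 * r - i - 2 * (i % 2 : ℕ)
  else if i < 2 * r - 1 then 2 * (r : ℤ) - 1 - i
  else if i ≤ 2 * r - 1 + (r + l) then (i : ℤ) - 2 * r + 1
  else 2 * (r + l) + 2 * r - 1 - i

theorem abs_potential₁_sub_le_one (hr : 1 ≤ r) (hrl : r ≤ l) {x y : PapVert (2 * (r + l))}
    (h : (papillon r l).Adj x y) (h₁ : s(x, y) ≠ crossEdge₁ r l) (h₂ : s(x, y) ≠ crossEdge₂ r l) :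
    |potential₁ r l x - potential₁ r l y| ≤ 1 := by
  refine ((adj_cases hrl (P := fun x y => |potential₁ r l x - potential₁ r l y| ≤ 1)
    (fun _ _ h => by rwa [abs_sub_comm]) ?_ ?_ ?_ ?_ ?_ h).resolve_left h₁).resolve_left h₂ <;>
  · intros
    simp (disch := omega) only [potential₁, pu, pv, index_natCast, cond_true, cond_false]
    rw [abs_le]
    split_ifs <;> omega

set_option maxHeartbeats 1000000 in
theorem abs_potential₂_sub_le_one (hr : 1 ≤ r) (hrl : r ≤ l) {x y : PapVert (2 * (r + l))}
    (h : (papillon r l).Adj x y) (h₁ : s(x, y) ≠ crossEdge₁ r l) (h₂ : s(x, y) ≠ crossEdge₂ r l) :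
    |potential₂ r l x - potential₂ r l y| ≤ 1 := by
  refine ((adj_cases hrl (P := fun x y => |potential₂ r l x - potential₂ r l y| ≤ 1)
    (fun _ _ h => by rwa [abs_sub_comm]) ?_ ?_ ?_ ?_ ?_ h).resolve_left h₁).resolve_left h₂ <;>
  · intros
    simp (disch := omega) only [potential₂, pu, pv, index_natCast, cond_true, cond_false]
    rw [abs_le]
    split_ifs <;> omega

theorem abs_potential₁_sub_of_eq_crossEdge₁ (hr : 1 ≤ r) (hrl : r ≤ l) {x y : PapVert (2 * (r + l))}
    (h : s(x, y) = crossEdge₁ r l) : |potential₁ r l x - potential₁ r l y| = 2 * r + 2 := by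
  rcases Sym2.eq_iff.mp h with ⟨rfl, rfl⟩ | ⟨rfl, rfl⟩ <;>
  · simp (disch := omega) only [potential₁, pv, index_natCast, cond_true]
    rw [abs_eq (by positivity)]
    split_ifs <;> omega

theorem abs_potential₂_sub_of_eq_crossEdge₂ (hr : 1 ≤ r) (hrl : r ≤ l) {x y : PapVert (2 * (r + l))}
    (h : s(x, y) = crossEdge₂ r l) : |potential₂ r l x - potential₂ r l y| = 2 * r + 2 := by
  rcases Sym2.eq_iff.mp h with ⟨rfl, rfl⟩ | ⟨rfl, rfl⟩ <;>
  · simp (disch := omega) only [potential₂, pv, index_natCast, cond_true]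
    rw [abs_eq (by positivity)]
    split_ifs <;> omega

theorem crossEdge_mem_edges_xor (hr : 1 ≤ r) (hrl : r ≤ l) {x : PapVert (2 * (r + l))}
    {c : (papillon r l).Walk x x} (hc : c.IsCycle) (hodd : Odd c.length) :
    (crossEdge₁ r l ∈ c.edges ∧ crossEdge₂ r l ∉ c.edges) ∨
      (crossEdge₂ r l ∈ c.edges ∧ crossEdge₁ r l ∉ c.edges) := by
  have hpar := c.add_eq_length_add_sum_count parity _ fun _ _ => parity_add_parity hr hrl
  rw [Finset.sum_pair (crossEdge₁_ne_crossEdge₂ hr hrl), CharTwo.add_self_eq_zero, eq_comm,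
    ← Nat.cast_add, ← Nat.cast_add, ZMod.natCast_eq_zero_iff] at hpar
  have h₁ := List.nodup_iff_count_le_one.mp hc.edges_nodup (crossEdge₁ r l)
  have h₂ := List.nodup_iff_count_le_one.mp hc.edges_nodup (crossEdge₂ r l)
  rw [Nat.odd_iff] at hodd
  simp only [← List.count_pos_iff]
  omega

theorem two_mul_add_three_le_length_of_crossEdge₁ (hr : 1 ≤ r) (hrl : r ≤ l)
    {x : PapVert (2 * (r + l))} {c : (papillon r l).Walk x x} (hc : c.IsTrail)
    (h₁ : crossEdge₁ r l ∈ c.edges) (h₂ : crossEdge₂ r l ∉ c.edges) : 2 * r + 3 ≤ c.length := by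
  have := hc.abs_sub_add_one_le_length (potential₁ r l) h₁ fun _ _ he hne =>
    abs_potential₁_sub_le_one hr hrl (c.adj_of_mem_edges he) hne (ne_of_mem_of_not_mem he h₂)
  rw [abs_potential₁_sub_of_eq_crossEdge₁ hr hrl rfl] at this
  omega

theorem two_mul_add_three_le_length_of_crossEdge₂ (hr : 1 ≤ r) (hrl : r ≤ l)
    {x : PapVert (2 * (r + l))} {c : (papillon r l).Walk x x} (hc : c.IsTrail)
    (h₂ : crossEdge₂ r l ∈ c.edges) (h₁ : crossEdge₁ r l ∉ c.edges) : 2 * r + 3 ≤ c.length := by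
  have := hc.abs_sub_add_one_le_length (potential₂ r l) h₂ fun _ _ he hne =>
    abs_potential₂_sub_le_one hr hrl (c.adj_of_mem_edges he) (ne_of_mem_of_not_mem he h₁) hne
  rw [abs_potential₂_sub_of_eq_crossEdge₂ hr hrl rfl] at this
  omega

theorem exists_isCycle_length_eq (hr : 1 ≤ r) (hrl : r ≤ l) :
    ∃ (x : PapVert (2 * (r + l))) (c : (papillon r l).Walk x x),
      c.IsCycle ∧ c.length = 2 * r + 3 := by
  have adj : ∀ {x y}, s(x, y) ∈ papillonEdges r l → x ≠ y → (papillon r l).Adj x y :=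
    fun he hne => (fromEdgeSet_adj _).mpr ⟨he, hne⟩
  have outer : ∀ i, 1 ≤ i → i < 2 * (r + l) → (papillon r l).Adj (pu _ i) (pu _ (i + 1)) :=
    fun i h₁ h₂ => adj (.inl ⟨i, h₁, by omega, rfl⟩) fun h => by
      have := eq_of_natCast_eq (by omega) (by omega) (by omega) (by omega) (Prod.ext_iff.mp h).2
      omega
  have spoke : ∀ i, 1 ≤ i → i ≤ 2 * (r + l) → (papillon r l).Adj (pu _ i) (pv _ i) :=
    fun i h₁ h₂ => adj (.inr (.inr (.inl ⟨i, h₁, h₂, rfl⟩))) (by simp [pu, pv])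
  have cross : (papillon r l).Adj (pv _ (2 * r + 2)) (pv _ 2) :=
    adj (by simp [papillonEdges, min_eq_left hrl, Sym2.eq_swap]) fun h => by
      have := eq_of_natCast_eq (by omega) (by omega) (by omega) (by omega) (Prod.ext_iff.mp h).2
      omega
  let f : ℕ → PapVert (2 * (r + l)) := fun k =>
    if k ≤ 2 * r then pu _ (k + 2) else if k = 2 * r + 1 then pv _ (2 * r + 2) else pv _ 2
  refine exists_isCycle_length_eq_of_injOn (by omega) (f := f) ?_ ?_ ?_
  · intro a ha b hb hab
    simp only [Set.mem_Iio] at ha hb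
    simp only [f, pu, pv] at hab
    split_ifs at hab <;>
      simp only [Prod.mk.injEq, Bool.false_eq_true, Bool.true_eq_false, false_and, true_and] at hab <;>
      first
        | omega
        | (have := eq_of_natCast_eq (by omega) (by omega) (by omega) (by omega) hab; omega)
  · intro k hk
    simp only [f]
    split_ifs <;> first
      | omega
      | exact cross
      | (rw [show k + 1 + 2 = k + 2 + 1 by omega]; exact outer _ (by omega) (by omega))
      | (rw [show k + 2 = 2 * r + 2 by omega]; exact spoke _ (by omega) (by omega))
  · simp only [f]
    rw [if_neg (by omega), if_neg (by omega), if_pos (by omega)]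
    exact (spoke 2 (by omega) (by omega)).symm

end Papillon

/-- For all positive integers `r ≤ ℓ`, every odd cycle of the papillon graph `P_{r,ℓ}` has
length at least `2r+3`, and there is an odd cycle of length exactly `2r+3`; hence a
shortest odd cycle of `P_{r,ℓ}` has length exactly `2r+3`. -/
theorem statement4 (r l : ℕ) (hr : 1 ≤ r) (hrl : r ≤ l) :
    (∀ (x : PapVert (2 * (r + l))) (c : (papillon r l).Walk x x),
        c.IsCycle → Odd c.length → 2 * r + 3 ≤ c.length)
      ∧ ∃ (x : PapVert (2 * (r + l))) (c : (papillon r l).Walk x x),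
          c.IsCycle ∧ Odd c.length ∧ c.length = 2 * r + 3 := by
  refine ⟨fun x c hc hodd => ?_, ?_⟩
  · rcases Papillon.crossEdge_mem_edges_xor hr hrl hc hodd with ⟨h₁, h₂⟩ | ⟨h₂, h₁⟩
    · exact Papillon.two_mul_add_three_le_length_of_crossEdge₁ hr hrl hc.isTrail h₁ h₂
    · exact Papillon.two_mul_add_three_le_length_of_crossEdge₂ hr hrl hc.isTrail h₂ h₁
  · obtain ⟨x, c, hc, hlen⟩ := Papillon.exists_isCycle_length_eq hr hrl
    exact ⟨x, c, hc, by rw [hlen]; exact ⟨r + 1, by ring⟩, hlen⟩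
end

section
/- For all positive integers r and ℓ, the papillon graph P_{r,ℓ} admits a graph automorphism ψ that maps the set of outer vertices {u_1,…,u_{2r+2ℓ}} bijectively onto the set of inner vertices {v_1,…,v_{2r+2ℓ}} and vice versa, maps every edge of the outer cycle to an edge of the inner cycle and every edge of the inner cycle to an edge of the outer cycle, and maps every spoke u_i v_i to a spoke. -/
open SimpleGraph


/-!
The automorphism exchanges the two cycles. Read backwards from `v₂`, the inner cycle is
`v₂, v₁, v₄, v₃, …, v_{2s}, v_{2s-1}, v_{N-1}, v_N, v_{N-3}, v_{N-2}, …, v_{2s+1}, v_{2s+2}`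
(`s = min r ℓ`, `N = 2(r+ℓ)`), that is `v_{g 1}, v_{g 2}, …, v_{g N}` for an involution `g` of
`{1, …, N}`. So `u_i ↦ v_{g i}`, `v_i ↦ u_{g i}` sends the outer cycle onto the inner one and
spokes to spokes, and, being an involution, the inner cycle back onto the outer one.
-/

def SimpleGraph.Iso.ofInvolutive {V : Type*} {G : SimpleGraph V} {f : V → V}
    (hf : Function.Involutive f) (hG : ∀ x y, G.Adj x y → G.Adj (f x) (f y)) : G ≃g G where
  toEquiv := hf.toPerm f
  map_rel_iff' {x y} := ⟨fun h => by simpa only [hf.coe_toPerm, hf _] using hG _ _ h, hG x y⟩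

namespace ZMod

def oneBasedVal {N : ℕ} (x : ZMod N) : ℕ := if x = 0 then N else x.val

theorem oneBasedVal_natCast {N i : ℕ} (hi : 1 ≤ i) (hiN : i ≤ N) :
    ((i : ZMod N)).oneBasedVal = i := by
  rcases hiN.lt_or_eq with hlt | rfl
  · have hval : ((i : ZMod N)).val = i := val_natCast_of_lt hlt
    have hne : (i : ZMod N) ≠ 0 := by
      rw [← val_ne_zero, hval]
      omega
    simp only [oneBasedVal, hne, if_false, hval]
  · simp [oneBasedVal]

variable {N : ℕ} [NeZero N]

theorem natCast_oneBasedVal (x : ZMod N) : (x.oneBasedVal : ZMod N) = x := by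
  unfold oneBasedVal
  split_ifs with hx
  · rw [hx, natCast_self]
  · exact natCast_zmod_val x

theorem one_le_oneBasedVal (x : ZMod N) : 1 ≤ x.oneBasedVal := by
  unfold oneBasedVal
  split_ifs with hx
  · exact Nat.one_le_iff_ne_zero.mpr (NeZero.ne N)
  · exact Nat.one_le_iff_ne_zero.mpr ((val_ne_zero x).mpr hx)

theorem oneBasedVal_le (x : ZMod N) : x.oneBasedVal ≤ N := by
  unfold oneBasedVal
  split_ifs
  exacts [le_rfl, (val_lt x).le]

end ZMod

/-- `u_i u_j` is an edge of the cycle `u_1 u_2 ⋯ u_N`. -/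
def OuterStep (N i j : ℕ) : Prop := (1 ≤ i ∧ j = i + 1 ∧ j ≤ N) ∨ (i = N ∧ j = 1)

/-- `v_i v_j` is an edge of the inner cycle of the papillon graph with `2m` inner vertices and
parameter `s`; the odd index `i` plays the role of `2k - 1`. -/
def InnerStep (s m i j : ℕ) : Prop :=
  (i % 2 = 1 ∧ j = i + 1 ∧ j ≤ 2 * m) ∨ (i % 2 = 1 ∧ j = i + 3 ∧ j ≤ 2 * m ∧ i + 1 ≠ 2 * s) ∨
    (i = 2 ∧ j = 2 * s + 2) ∨ (i = 2 * s - 1 ∧ j = 2 * m - 1)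

/-- The involution `g` of `{1, …, 2m}`, with `N = 2m`. -/
def papillonIndex (s m i : ℕ) : ℕ :=
  if i ≤ 2 * s then (if i % 2 = 1 then i + 1 else i - 1)
  else (if i % 2 = 1 then 2 * (s + m) - i else 2 * (s + m) + 2 - i)

section papillonIndex

variable {s m i j : ℕ}

theorem OuterStep.bounds {N : ℕ} (h : OuterStep N i j) (hN : 1 ≤ N) :
    1 ≤ i ∧ i ≤ N ∧ 1 ≤ j ∧ j ≤ N := by
  unfold OuterStep at h
  omega

theorem InnerStep.bounds (h : InnerStep s m i j) (hs : 1 ≤ s) (hsm : s < m) :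
    1 ≤ i ∧ i ≤ 2 * m ∧ 1 ≤ j ∧ j ≤ 2 * m := by
  unfold InnerStep at h
  omega

theorem papillonIndex_mem (hi : 1 ≤ i) (him : i ≤ 2 * m) :
    1 ≤ papillonIndex s m i ∧ papillonIndex s m i ≤ 2 * m := by
  unfold papillonIndex
  split_ifs <;> omega

theorem papillonIndex_papillonIndex (hi : 1 ≤ i) (him : i ≤ 2 * m) :
    papillonIndex s m (papillonIndex s m i) = i := by
  unfold papillonIndex
  split_ifs <;> omega

theorem papillonIndex_of_le_of_odd (hi : i ≤ 2 * s) (ho : i % 2 = 1) :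
    papillonIndex s m i = i + 1 := by
  simp [papillonIndex, hi, ho]

theorem papillonIndex_of_le_of_even (hi : i ≤ 2 * s) (he : i % 2 = 0) :
    papillonIndex s m i = i - 1 := by
  simp [papillonIndex, hi, he]

theorem papillonIndex_of_lt_of_odd (hi : 2 * s < i) (ho : i % 2 = 1) :
    papillonIndex s m i = 2 * (s + m) - i := by
  simp [papillonIndex, hi.not_ge, ho]

theorem papillonIndex_of_lt_of_even (hi : 2 * s < i) (he : i % 2 = 0) :
    papillonIndex s m i = 2 * (s + m) + 2 - i := by
  simp [papillonIndex, hi.not_ge, he]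

theorem innerStep_papillonIndex (hs : 1 ≤ s) (hsm : s < m) (h : OuterStep (2 * m) i j) :
    InnerStep s m (papillonIndex s m i) (papillonIndex s m j) ∨
      InnerStep s m (papillonIndex s m j) (papillonIndex s m i) := by
  rcases h with ⟨hi, rfl, hj⟩ | ⟨rfl, rfl⟩
  · rcases Nat.mod_two_eq_zero_or_one i with he | ho
    · rcases lt_trichotomy i (2 * s) with hlt | rfl | hgt
      · rw [papillonIndex_of_le_of_even hlt.le he,
          papillonIndex_of_le_of_odd (i := i + 1) (by omega) (by omega)]
        exact Or.inl (Or.inr (Or.inl ⟨by omega, by omega, by omega, by omega⟩))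
      · rw [papillonIndex_of_le_of_even le_rfl he,
          papillonIndex_of_lt_of_odd (i := 2 * s + 1) (by omega) (by omega)]
        exact Or.inl (Or.inr (Or.inr (Or.inr ⟨rfl, by omega⟩)))
      · rw [papillonIndex_of_lt_of_even hgt he,
          papillonIndex_of_lt_of_odd (i := i + 1) (by omega) (by omega)]
        exact Or.inr (Or.inr (Or.inl ⟨by omega, by omega, by omega, by omega⟩))
    · rcases lt_or_gt_of_ne (show i ≠ 2 * s by omega) with hlt | hgt
      · rw [papillonIndex_of_le_of_odd hlt.le ho,
          papillonIndex_of_le_of_even (i := i + 1) (by omega) (by omega)]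
        exact Or.inr (Or.inl ⟨by omega, by omega, by omega⟩)
      · rw [papillonIndex_of_lt_of_odd hgt ho,
          papillonIndex_of_lt_of_even (i := i + 1) (by omega) (by omega)]
        exact Or.inl (Or.inl ⟨by omega, by omega, by omega⟩)
  · rw [papillonIndex_of_lt_of_even (i := 2 * m) (by omega) (by omega),
      papillonIndex_of_le_of_odd (i := 1) (by omega) rfl]
    exact Or.inr (Or.inr (Or.inr (Or.inl ⟨rfl, by omega⟩)))

theorem outerStep_papillonIndex (hs : 1 ≤ s) (hsm : s < m) (h : InnerStep s m i j) :
    OuterStep (2 * m) (papillonIndex s m i) (papillonIndex s m j) ∨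
      OuterStep (2 * m) (papillonIndex s m j) (papillonIndex s m i) := by
  rcases h with ⟨ho, rfl, hj⟩ | ⟨ho, rfl, hj, hne⟩ | ⟨rfl, rfl⟩ | ⟨rfl, rfl⟩
  · rcases le_or_gt (i + 1) (2 * s) with hle | hgt
    · rw [papillonIndex_of_le_of_odd (by omega) ho,
        papillonIndex_of_le_of_even (i := i + 1) hle (by omega)]
      exact Or.inr (Or.inl ⟨by omega, rfl, by omega⟩)
    · rw [papillonIndex_of_lt_of_odd (by omega) ho,
        papillonIndex_of_lt_of_even (i := i + 1) (by omega) (by omega)]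
      exact Or.inl (Or.inl ⟨by omega, by omega, by omega⟩)
  · rcases lt_or_gt_of_ne hne with hlt | hgt
    · rw [papillonIndex_of_le_of_odd (by omega) ho,
        papillonIndex_of_le_of_even (i := i + 3) (by omega) (by omega)]
      exact Or.inl (Or.inl ⟨by omega, by omega, by omega⟩)
    · rw [papillonIndex_of_lt_of_odd (by omega) ho,
        papillonIndex_of_lt_of_even (i := i + 3) (by omega) (by omega)]
      exact Or.inr (Or.inl ⟨by omega, by omega, by omega⟩)
  · rw [papillonIndex_of_le_of_even (i := 2) (by omega) rfl,
      papillonIndex_of_lt_of_even (i := 2 * s + 2) (by omega) (by omega)]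
    exact Or.inr (Or.inr ⟨by omega, rfl⟩)
  · rw [papillonIndex_of_le_of_odd (i := 2 * s - 1) (by omega) (by omega),
      papillonIndex_of_lt_of_odd (i := 2 * m - 1) (by omega) (by omega)]
    exact Or.inl (Or.inl ⟨by omega, by omega, by omega⟩)

end papillonIndex

def papillonSwap (r l : ℕ) (x : PapVert (2 * (r + l))) : PapVert (2 * (r + l)) :=
  (!x.1, (papillonIndex (min r l) (r + l) x.2.oneBasedVal : ZMod (2 * (r + l))))

section papillonSwap

variable {r l : ℕ}

theorem papillonEdges_eq : papillonEdges r l =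
    {e | (∃ i j, OuterStep (2 * (r + l)) i j ∧ e = s(pu _ i, pu _ j)) ∨
      (∃ i, 1 ≤ i ∧ i ≤ 2 * (r + l) ∧ e = s(pu _ i, pv _ i)) ∨
      (∃ i j, InnerStep (min r l) (r + l) i j ∧ e = s(pv _ i, pv _ j))} := by
  ext e
  simp only [papillonEdges, Set.mem_ofPred_eq]
  constructor
  · rintro (⟨i, h1, h2, rfl⟩ | rfl | ⟨i, h1, h2, rfl⟩ | ⟨k, h1, h2, rfl⟩ | ⟨k, h1, h2, hk, rfl⟩ |
      rfl | rfl)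
    · exact Or.inl ⟨_, _, Or.inl ⟨h1, rfl, by omega⟩, rfl⟩
    · exact Or.inl ⟨_, _, Or.inr ⟨rfl, rfl⟩, rfl⟩
    · exact Or.inr (Or.inl ⟨i, h1, h2, rfl⟩)
    · exact Or.inr (Or.inr ⟨_, _, Or.inl ⟨by omega, by omega, by omega⟩, rfl⟩)
    · exact Or.inr (Or.inr ⟨_, _, Or.inr (Or.inl ⟨by omega, by omega, by omega, by omega⟩), rfl⟩)
    · exact Or.inr (Or.inr ⟨_, _, Or.inr (Or.inr (Or.inl ⟨rfl, rfl⟩)), rfl⟩)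
    · exact Or.inr (Or.inr ⟨_, _, Or.inr (Or.inr (Or.inr ⟨rfl, rfl⟩)), rfl⟩)
  · rintro (⟨i, j, ⟨h1, rfl, h2⟩ | ⟨rfl, rfl⟩, rfl⟩ | ⟨i, h1, h2, rfl⟩ |
      ⟨i, j, ⟨ho, rfl, hj⟩ | ⟨ho, rfl, hj, hne⟩ | ⟨rfl, rfl⟩ | ⟨rfl, rfl⟩, rfl⟩)
    · exact Or.inl ⟨i, h1, by omega, rfl⟩
    · exact Or.inr (Or.inl rfl)
    · exact Or.inr (Or.inr (Or.inl ⟨i, h1, h2, rfl⟩))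
    · refine Or.inr (Or.inr (Or.inr (Or.inl ⟨(i + 1) / 2, by omega, by omega, ?_⟩)))
      rw [show 2 * ((i + 1) / 2) - 1 = i by omega, show 2 * ((i + 1) / 2) = i + 1 by omega]
    · refine Or.inr (Or.inr (Or.inr (Or.inr (Or.inl
        ⟨(i + 1) / 2, by omega, by omega, by omega, ?_⟩))))
      rw [show 2 * ((i + 1) / 2) - 1 = i by omega, show 2 * ((i + 1) / 2) + 2 = i + 3 by omega]
    · exact Or.inr (Or.inr (Or.inr (Or.inr (Or.inr (Or.inl rfl)))))
    · exact Or.inr (Or.inr (Or.inr (Or.inr (Or.inr (Or.inr rfl)))))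

theorem papillonSwap_pu {i : ℕ} (hi : 1 ≤ i) (hiN : i ≤ 2 * (r + l)) :
    papillonSwap r l (pu _ i) = pv _ (papillonIndex (min r l) (r + l) i) := by
  simp [papillonSwap, pu, pv, ZMod.oneBasedVal_natCast hi hiN]

theorem papillonSwap_pv {i : ℕ} (hi : 1 ≤ i) (hiN : i ≤ 2 * (r + l)) :
    papillonSwap r l (pv _ i) = pu _ (papillonIndex (min r l) (r + l) i) := by
  simp [papillonSwap, pu, pv, ZMod.oneBasedVal_natCast hi hiN]

theorem papillonSwap_involutive (hrl : 0 < r + l) : Function.Involutive (papillonSwap r l) := by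
  have : NeZero (2 * (r + l)) := ⟨by omega⟩
  rintro ⟨b, x⟩
  have h1 := x.one_le_oneBasedVal
  have h2 := x.oneBasedVal_le
  have hg : ((papillonIndex (min r l) (r + l) x.oneBasedVal : ZMod (2 * (r + l)))).oneBasedVal =
      papillonIndex (min r l) (r + l) x.oneBasedVal :=
    ZMod.oneBasedVal_natCast (papillonIndex_mem h1 h2).1 (papillonIndex_mem h1 h2).2
  simp only [papillonSwap, Bool.not_not, hg, papillonIndex_papillonIndex h1 h2,
    ZMod.natCast_oneBasedVal]

theorem map_papillonSwap_mem_papillonEdges (hr : 1 ≤ r) (hl : 1 ≤ l)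
    {e : Sym2 (PapVert (2 * (r + l)))} (he : e ∈ papillonEdges r l) :
    e.map (papillonSwap r l) ∈ papillonEdges r l := by
  have hs : 1 ≤ min r l := le_min hr hl
  have hsm : min r l < r + l := by omega
  rw [papillonEdges_eq] at he ⊢
  rcases he with ⟨i, j, h, rfl⟩ | ⟨i, h1, h2, rfl⟩ | ⟨i, j, h, rfl⟩
  · obtain ⟨hi1, hi2, hj1, hj2⟩ := h.bounds (by omega)
    rw [Sym2.map_mk, papillonSwap_pu hi1 hi2, papillonSwap_pu hj1 hj2]
    rcases innerStep_papillonIndex hs hsm h with h' | h'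
    · exact Or.inr (Or.inr ⟨_, _, h', rfl⟩)
    · exact Or.inr (Or.inr ⟨_, _, h', Sym2.eq_swap⟩)
  · rw [Sym2.map_mk, papillonSwap_pu h1 h2, papillonSwap_pv h1 h2]
    exact Or.inr (Or.inl ⟨_, (papillonIndex_mem h1 h2).1, (papillonIndex_mem h1 h2).2,
      Sym2.eq_swap⟩)
  · obtain ⟨hi1, hi2, hj1, hj2⟩ := h.bounds hs hsm
    rw [Sym2.map_mk, papillonSwap_pv hi1 hi2, papillonSwap_pv hj1 hj2]
    rcases outerStep_papillonIndex hs hsm h with h' | h'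
    · exact Or.inl ⟨_, _, h', rfl⟩
    · exact Or.inl ⟨_, _, h', Sym2.eq_swap⟩

theorem papillon_adj_papillonSwap (hr : 1 ≤ r) (hl : 1 ≤ l) {x y : PapVert (2 * (r + l))}
    (h : (papillon r l).Adj x y) :
    (papillon r l).Adj (papillonSwap r l x) (papillonSwap r l y) := by
  rw [papillon, fromEdgeSet_adj] at h ⊢
  exact ⟨map_papillonSwap_mem_papillonEdges hr hl h.1,
    (papillonSwap_involutive (by omega)).injective.ne h.2⟩

end papillonSwap

/-- The papillon graph `P_{r,ℓ}` admits an automorphism `ψ` that maps the outer vertices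
onto the inner vertices and vice versa (hence maps every outer-cycle edge to an
inner-cycle edge and every inner-cycle edge to an outer-cycle edge), and maps every
spoke `u_i v_i` to a spoke `u_j v_j`. -/
theorem statement7 (r l : ℕ) (hr : 1 ≤ r) (hl : 1 ≤ l) :
    ∃ ψ : papillon r l ≃g papillon r l,
      (∀ x : PapVert (2 * (r + l)), x.1 = false → (ψ x).1 = true) ∧
      (∀ x : PapVert (2 * (r + l)), x.1 = true → (ψ x).1 = false) ∧
      (∀ i, 1 ≤ i → i ≤ 2 * (r + l) →
        ∃ j, 1 ≤ j ∧ j ≤ 2 * (r + l) ∧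
          ψ (pu (2 * (r + l)) i) = pv (2 * (r + l)) j ∧
          ψ (pv (2 * (r + l)) i) = pu (2 * (r + l)) j) := by
  refine ⟨.ofInvolutive (papillonSwap_involutive (by omega)) fun _ _ =>
      papillon_adj_papillonSwap hr hl,
    fun x hx => by simp [Iso.ofInvolutive, papillonSwap, hx],
    fun x hx => by simp [Iso.ofInvolutive, papillonSwap, hx],
    fun i hi hiN => ⟨_, (papillonIndex_mem hi hiN).1, (papillonIndex_mem hi hiN).2,
      papillonSwap_pu hi hiN, papillonSwap_pv hi hiN⟩⟩
end

section
/- Let n be a positive integer, let M be a perfect matching of the balanced papillon graph P_n, and let X be its principal 4-edge-cut. Then for every j ∈ {1,…,2n}, the number of edges of M in ∂T_j equals the number of edges of M in X, i.e., |M ∩ ∂T_j| = |M ∩ X|. -/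
open SimpleGraph


/-- The principal 4-edge-cut `X = {a, b, c, d}` of the balanced papillon graph `P_n`,
where `a = u₁u_{4n}`, `b = v_{2n-1}v_{4n-1}`, `c = v₂v_{2n+2}`, `d = u_{2n}u_{2n+1}`. -/
def Xcut (n : ℕ) : Set (Sym2 (PapVert (2 * (n + n)))) :=
  {s(pu (2 * (n + n)) 1, pu (2 * (n + n)) (4 * n)),
   s(pv (2 * (n + n)) (2 * n - 1), pv (2 * (n + n)) (4 * n - 1)),
   s(pv (2 * (n + n)) 2, pv (2 * (n + n)) (2 * n + 2)),
   s(pu (2 * (n + n)) (2 * n), pu (2 * (n + n)) (2 * n + 1))}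

/-- The vertex set `{u_{2j-1}, u_{2j}, v_{2j-1}, v_{2j}}` of the 4-pole `T_j` of `P_n`. -/
def Tverts (n j : ℕ) : Set (PapVert (2 * (n + n))) :=
  {pu (2 * (n + n)) (2 * j - 1), pu (2 * (n + n)) (2 * j),
   pv (2 * (n + n)) (2 * j - 1), pv (2 * (n + n)) (2 * j)}

/-- `∂T_j`: the set of edges of `P_n` with exactly one endpoint in
`{u_{2j-1}, u_{2j}, v_{2j-1}, v_{2j}}`. -/
def boundaryT (n j : ℕ) : Set (Sym2 (PapVert (2 * (n + n)))) :=
  {e | e ∈ (papillon n n).edgeSet ∧ ∃ x y, e = s(x, y) ∧ x ∈ Tverts n j ∧ y ∉ Tverts n j}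

/-!
Each 4-pole `T_j` induces the square `u_{2j-1} u_{2j} v_{2j} v_{2j-1}`. Summing the
perfect-matching condition over the diagonal pair `{u_{2j-1}, v_{2j}}` and over the other
diagonal pair `{u_{2j}, v_{2j-1}}` counts every square edge once, so `M` uses as many of the two
edges leaving `T_j` on the left as of the two leaving it on the right. Consecutive 4-poles share
these pairs of edges, except where the inner cycle is rerouted, so this number is constant along
`T_1, …, T_n` and along `T_{n+1}, …, T_{2n}`. The cut `X` consists of the left pair of `T_1` and
the right pair of `T_n`, and equally of the left pair of `T_{n+1}` and the right pair of `T_{2n}`;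
hence `|M ∩ X|` is twice that constant on either half, and so is `|M ∩ ∂T_j|`.
-/

section Counting

variable {α : Type*}

theorem Set.ncard_inter_coe_eq_sum_indicator (M : Set α) (s : Finset α) :
    (M ∩ ↑s).ncard = ∑ e ∈ s, M.indicator (1 : α → ℕ) e := by
  classical
  rw [show M ∩ ↑s = ↑(s.filter (· ∈ M)) by ext; simp [and_comm], Set.ncard_coe_finset,
    Finset.card_filter]
  simp only [Set.indicator_apply, Pi.one_apply]

theorem Set.ncard_inter_quadruple (M : Set α) {a b c d : α} (hab : a ≠ b) (hac : a ≠ c)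
    (had : a ≠ d) (hbc : b ≠ c) (hbd : b ≠ d) (hcd : c ≠ d) :
    (M ∩ {a, b, c, d}).ncard =
      M.indicator (1 : α → ℕ) a + M.indicator 1 b + M.indicator 1 c + M.indicator 1 d := by
  classical
  rw [show ({a, b, c, d} : Set α) = ↑({a, b, c, d} : Finset α) by push_cast; rfl,
    Set.ncard_inter_coe_eq_sum_indicator, Finset.sum_insert (by simp [hab, hac, had]),
    Finset.sum_insert (by simp [hbc, hbd]), Finset.sum_pair hcd, add_assoc, add_assoc]

end Counting

section SquarePole

variable {V : Type*} {G : SimpleGraph V} {M : Set (Sym2 V)}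

theorem IsPerfMatching.indicator_add_indicator_add_indicator_eq_one (hM : IsPerfMatching G M)
    {v w₁ w₂ w₃ : V} (h₁₂ : w₁ ≠ w₂) (h₁₃ : w₁ ≠ w₃) (h₂₃ : w₂ ≠ w₃)
    (hadj : ∀ w, G.Adj v w → w = w₁ ∨ w = w₂ ∨ w = w₃) :
    M.indicator (1 : Sym2 V → ℕ) s(v, w₁) + M.indicator 1 s(v, w₂) + M.indicator 1 s(v, w₃) =
      1 := by
  classical
  obtain ⟨e, ⟨heM, hve⟩, huniq⟩ := hM.2 v
  obtain ⟨w, rfl⟩ := Sym2.mem_iff_exists.1 hve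
  have hmem : ∀ u, s(v, u) ∈ M ↔ u = w := fun u =>
    ⟨fun hu => Sym2.congr_right.1 (huniq _ ⟨hu, Sym2.mem_mk_left _ _⟩), by rintro rfl; exact heM⟩
  have hind : ∀ u, M.indicator (1 : Sym2 V → ℕ) s(v, u) = if u = w then 1 else 0 := fun u => by
    by_cases hu : u = w
    · simp [hu, heM]
    · simp [hu, Set.indicator_of_notMem (mt (hmem u).1 hu)]
  simp only [hind]
  rcases hadj w (hM.1 heM) with rfl | rfl | rfl <;>
    simp [h₁₂, h₁₃, h₂₃, h₁₂.symm, h₁₃.symm, h₂₃.symm]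

/-- A 4-pole of `G` on the square `a₁ a₂ b₂ b₁`: each of its vertices has, besides its two
neighbours on the square, only one neighbour (`x₁, x₂, y₁, y₂` respectively), lying outside.
The edges `a₁x₁, b₂y₂` are its left ports and `a₂x₂, b₁y₁` its right ports. -/
structure IsSquarePole (G : SimpleGraph V) (a₁ a₂ b₁ b₂ x₁ x₂ y₁ y₂ : V) : Prop where
  a₁_ne_a₂ : a₁ ≠ a₂
  b₁_ne_b₂ : b₁ ≠ b₂
  a₁_ne_b₁ : a₁ ≠ b₁
  a₂_ne_b₂ : a₂ ≠ b₂
  a₁_ne_b₂ : a₁ ≠ b₂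
  a₂_ne_b₁ : a₂ ≠ b₁
  x₁_notMem : x₁ ∉ ({a₁, a₂, b₁, b₂} : Set V)
  x₂_notMem : x₂ ∉ ({a₁, a₂, b₁, b₂} : Set V)
  y₁_notMem : y₁ ∉ ({a₁, a₂, b₁, b₂} : Set V)
  y₂_notMem : y₂ ∉ ({a₁, a₂, b₁, b₂} : Set V)
  adj_a₁ : ∀ w, G.Adj a₁ w → w = x₁ ∨ w = a₂ ∨ w = b₁
  adj_a₂ : ∀ w, G.Adj a₂ w → w = x₂ ∨ w = a₁ ∨ w = b₂
  adj_b₁ : ∀ w, G.Adj b₁ w → w = y₁ ∨ w = b₂ ∨ w = a₁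
  adj_b₂ : ∀ w, G.Adj b₂ w → w = y₂ ∨ w = b₁ ∨ w = a₂

namespace IsSquarePole

variable {a₁ a₂ b₁ b₂ x₁ x₂ y₁ y₂ : V}

theorem indicator_left_eq_right (hP : IsSquarePole G a₁ a₂ b₁ b₂ x₁ x₂ y₁ y₂)
    (hM : IsPerfMatching G M) :
    M.indicator (1 : Sym2 V → ℕ) s(a₁, x₁) + M.indicator 1 s(b₂, y₂) =
      M.indicator 1 s(a₂, x₂) + M.indicator 1 s(b₁, y₁) := by
  obtain ⟨-, -, -, -, hab₂, hab₁, hx₁, hx₂, hy₁, hy₂, ha₁, ha₂, hb₁, hb₂⟩ := hP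
  simp only [Set.mem_insert_iff, Set.mem_singleton_iff, not_or] at hx₁ hx₂ hy₁ hy₂
  replace ha₁ := hM.indicator_add_indicator_add_indicator_eq_one hx₁.2.1 hx₁.2.2.1 hab₁ ha₁
  replace ha₂ := hM.indicator_add_indicator_add_indicator_eq_one hx₂.1 hx₂.2.2.2 hab₂ ha₂
  replace hb₁ := hM.indicator_add_indicator_add_indicator_eq_one hy₁.2.2.2 hy₁.1 hab₂.symm hb₁
  replace hb₂ := hM.indicator_add_indicator_add_indicator_eq_one hy₂.2.2.1 hy₂.2.1 hab₁.symm hb₂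
  rw [Sym2.eq_swap (a := a₂) (b := a₁)] at ha₂
  rw [Sym2.eq_swap (a := b₁) (b := a₁)] at hb₁
  rw [Sym2.eq_swap (a := b₂) (b := b₁), Sym2.eq_swap (a := b₂) (b := a₂)] at hb₂
  omega

theorem inter_boundary_eq (hP : IsSquarePole G a₁ a₂ b₁ b₂ x₁ x₂ y₁ y₂)
    (hM : M ⊆ G.edgeSet) :
    M ∩ {e | e ∈ G.edgeSet ∧ ∃ x y, e = s(x, y) ∧ x ∈ ({a₁, a₂, b₁, b₂} : Set V) ∧
        y ∉ ({a₁, a₂, b₁, b₂} : Set V)} =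
      M ∩ {s(a₁, x₁), s(b₂, y₂), s(a₂, x₂), s(b₁, y₁)} := by
  ext e
  simp only [Set.mem_inter_iff, Set.mem_ofPred_eq, and_congr_right_iff]
  intro heM
  constructor
  · rintro ⟨he, x, y, rfl, hx, hy⟩
    rw [SimpleGraph.mem_edgeSet] at he
    simp only [Set.mem_insert_iff, Set.mem_singleton_iff] at hx hy ⊢
    rcases hx with rfl | rfl | rfl | rfl
    · rcases hP.adj_a₁ y he with rfl | rfl | rfl <;> tauto
    · rcases hP.adj_a₂ y he with rfl | rfl | rfl <;> tauto
    · rcases hP.adj_b₁ y he with rfl | rfl | rfl <;> tauto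
    · rcases hP.adj_b₂ y he with rfl | rfl | rfl <;> tauto
  · intro he
    refine ⟨hM heM, ?_⟩
    simp only [Set.mem_insert_iff, Set.mem_singleton_iff] at he
    rcases he with rfl | rfl | rfl | rfl
    · exact ⟨a₁, x₁, rfl, by simp, hP.x₁_notMem⟩
    · exact ⟨b₂, y₂, rfl, by simp, hP.y₂_notMem⟩
    · exact ⟨a₂, x₂, rfl, by simp, hP.x₂_notMem⟩
    · exact ⟨b₁, y₁, rfl, by simp, hP.y₁_notMem⟩

theorem ncard_inter_boundary (hP : IsSquarePole G a₁ a₂ b₁ b₂ x₁ x₂ y₁ y₂)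
    (hM : IsPerfMatching G M) :
    (M ∩ {e | e ∈ G.edgeSet ∧ ∃ x y, e = s(x, y) ∧ x ∈ ({a₁, a₂, b₁, b₂} : Set V) ∧
        y ∉ ({a₁, a₂, b₁, b₂} : Set V)}).ncard =
      2 * (M.indicator (1 : Sym2 V → ℕ) s(a₂, x₂) + M.indicator 1 s(b₁, y₁)) := by
  have hLR := hP.indicator_left_eq_right hM
  rw [hP.inter_boundary_eq hM.1, Set.ncard_inter_quadruple]
  · omega
  all_goals
    obtain ⟨_, _, _, _, _, _, hx₁, hx₂, hy₁, hy₂, -, -, -, -⟩ := hP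
    simp only [Set.mem_insert_iff, Set.mem_singleton_iff, not_or] at hx₁ hx₂ hy₁ hy₂
    simp only [ne_eq, Sym2.eq_iff, not_or, not_and]
    grind

end IsSquarePole

end SquarePole

theorem ZMod.natCast_eq_natCast_iff_of_lt_two_mul {m a b : ℕ} (ha : a < 2 * m) (hb : b < 2 * m) :
    (a : ZMod m) = b ↔ a = b ∨ a = b + m ∨ b = a + m := by
  rw [ZMod.natCast_eq_natCast_iff']
  constructor
  · intro h
    rcases lt_or_ge a m with ha' | ha' <;> rcases lt_or_ge b m with hb' | hb'
    · rw [Nat.mod_eq_of_lt ha', Nat.mod_eq_of_lt hb'] at h; omega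
    · rw [Nat.mod_eq_of_lt ha', Nat.mod_eq_sub_mod hb', Nat.mod_eq_of_lt (by omega)] at h; omega
    · rw [Nat.mod_eq_of_lt hb', Nat.mod_eq_sub_mod ha', Nat.mod_eq_of_lt (by omega)] at h; omega
    · rw [Nat.mod_eq_sub_mod ha', Nat.mod_eq_sub_mod hb', Nat.mod_eq_of_lt (by omega),
        Nat.mod_eq_of_lt (by omega)] at h; omega
  · rintro (rfl | rfl | rfl) <;> simp

/-- In `P_n`, the index of the neighbour of `v_{2J+2}` outside `T_{J+1}`: `v_{2J-1}`, except
that `v_2` and `v_{2n+2}` are joined to each other (`2J + 2 + 2n` is read modulo `4n`). -/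
def innerPrev (n J : ℕ) : ℕ := if J = 0 ∨ J = n then 2 * J + 2 + 2 * n else 2 * J - 1

/-- In `P_n`, the index of the neighbour of `v_{2J+1}` outside `T_{J+1}`: `v_{2J+4}`, except
that `v_{2n-1}` and `v_{4n-1}` are joined to each other. -/
def innerNext (n J : ℕ) : ℕ := if J + 1 = n ∨ J + 1 = 2 * n then 2 * J + 1 + 2 * n else 2 * J + 4

set_option maxHeartbeats 1000000 in
theorem isSquarePole_papillon {n J : ℕ} (hJ : J < 2 * n) :
    IsSquarePole (papillon n n) (pu _ (2 * J + 1)) (pu _ (2 * J + 2)) (pv _ (2 * J + 1))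
      (pv _ (2 * J + 2)) (pu _ (2 * J)) (pu _ (2 * J + 3)) (pv _ (innerNext n J))
      (pv _ (innerPrev n J)) := by
  have : NeZero (2 * (n + n)) := ⟨by omega⟩
  constructor
  -- the four neighbourhood conditions: run through the edge families of `papillonEdges`
  all_goals try
    intro w hw
    obtain ⟨b, z⟩ := w
    obtain ⟨k, hk, rfl⟩ : ∃ k < 2 * (n + n), (k : ZMod _) = z :=
      ⟨z.val, ZMod.val_lt z, ZMod.natCast_zmod_val z⟩
    replace hw := ((SimpleGraph.fromEdgeSet_adj _).1 hw).1
    simp only [papillonEdges, Set.mem_ofPred_eq, min_self, Sym2.eq_iff, pu, pv,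
      Prod.mk.injEq] at hw
    rcases hw with ⟨i, hi1, hi2, h⟩ | h | ⟨i, hi1, hi2, h⟩ | ⟨i, hi1, hi2, h⟩ |
      ⟨i, hi1, hi2, hi3, h⟩ | h | h
  -- every index left is a natural number below `8n`, so each equation in `ZMod (4n)` becomes
  -- a linear disjunction that `omega` decides
  all_goals try simp only [innerNext, innerPrev]
  all_goals try split_ifs
  all_goals simp (disch := omega) only [pu, pv, ne_eq, Prod.mk.injEq, Set.mem_insert_iff,
    Set.mem_singleton_iff, ZMod.natCast_eq_natCast_iff_of_lt_two_mul] at *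
  all_goals (try cases b) <;>
    (try simp only [Bool.false_eq_true, Bool.true_eq_false, true_and, false_and, and_false,
      or_false, false_or, not_or, not_false_eq_true, and_true] at *) <;> omega

theorem Tverts_succ (n J : ℕ) :
    Tverts n (J + 1) =
      {pu _ (2 * J + 1), pu _ (2 * J + 2), pv _ (2 * J + 1), pv _ (2 * J + 2)} := by
  rw [Tverts, show 2 * (J + 1) - 1 = 2 * J + 1 by omega, show 2 * (J + 1) = 2 * J + 2 by omega]

theorem leftPorts_succ_eq_rightPorts {n K : ℕ} (hK : K + 1 < 2 * n) (hKn : K + 1 ≠ n) :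
    s(pu (2 * (n + n)) (2 * (K + 1) + 1), pu _ (2 * (K + 1))) =
        s(pu _ (2 * K + 2), pu _ (2 * K + 3)) ∧
      s(pv (2 * (n + n)) (2 * (K + 1) + 2), pv _ (innerPrev n (K + 1))) =
        s(pv _ (2 * K + 1), pv _ (innerNext n K)) := by
  rw [innerPrev, innerNext, if_neg (by omega), if_neg (by omega)]
  simp (disch := omega) only [Sym2.eq_iff, pu, pv, Prod.mk.injEq, true_and,
    ZMod.natCast_eq_natCast_iff_of_lt_two_mul]
  omega

theorem Xcut_edges_eq_ports {n : ℕ} (hn : 1 ≤ n) :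
    s(pu (2 * (n + n)) 1, pu _ (4 * n)) = s(pu _ (2 * 0 + 1), pu _ (2 * 0)) ∧
    s(pu (2 * (n + n)) 1, pu _ (4 * n)) =
      s(pu _ (2 * (2 * n - 1) + 2), pu _ (2 * (2 * n - 1) + 3)) ∧
    s(pv (2 * (n + n)) (2 * n - 1), pv _ (4 * n - 1)) =
      s(pv _ (2 * (n - 1) + 1), pv _ (innerNext n (n - 1))) ∧
    s(pv (2 * (n + n)) (2 * n - 1), pv _ (4 * n - 1)) =
      s(pv _ (2 * (2 * n - 1) + 1), pv _ (innerNext n (2 * n - 1))) ∧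
    s(pv (2 * (n + n)) 2, pv _ (2 * n + 2)) = s(pv _ (2 * 0 + 2), pv _ (innerPrev n 0)) ∧
    s(pv (2 * (n + n)) 2, pv _ (2 * n + 2)) = s(pv _ (2 * n + 2), pv _ (innerPrev n n)) ∧
    s(pu (2 * (n + n)) (2 * n), pu _ (2 * n + 1)) =
      s(pu _ (2 * (n - 1) + 2), pu _ (2 * (n - 1) + 3)) ∧
    s(pu (2 * (n + n)) (2 * n), pu _ (2 * n + 1)) = s(pu _ (2 * n + 1), pu _ (2 * n)) := by
  rw [innerNext, innerNext, innerPrev, innerPrev, if_pos (by omega), if_pos (by omega),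
    if_pos (by omega), if_pos (by omega)]
  simp (disch := omega) only [Sym2.eq_iff, pu, pv, Prod.mk.injEq, true_and, and_true, or_true,
    ZMod.natCast_eq_natCast_iff_of_lt_two_mul]
  omega

theorem ncard_inter_Xcut_eq {n : ℕ} (M : Set (Sym2 (PapVert (2 * (n + n))))) (hn : 1 ≤ n) :
    (M ∩ Xcut n).ncard =
      M.indicator 1 s(pu _ 1, pu _ (4 * n)) +
        M.indicator 1 s(pv _ (2 * n - 1), pv _ (4 * n - 1)) +
        M.indicator 1 s(pv _ 2, pv _ (2 * n + 2)) +
        M.indicator 1 s(pu _ (2 * n), pu _ (2 * n + 1)) := by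
  rw [Xcut]
  apply Set.ncard_inter_quadruple
  all_goals
    simp (disch := omega) only [ne_eq, Sym2.eq_iff, pu, pv, Prod.mk.injEq, Bool.false_eq_true,
      Bool.true_eq_false, true_and, false_and, or_false, not_false_eq_true,
      ZMod.natCast_eq_natCast_iff_of_lt_two_mul] <;> omega

/-- The number of edges of `M` among the right ports of `T_{J+1}` (blocks are indexed from `0`
here, as in `innerPrev` and `innerNext`). -/
noncomputable def rightFlow (n : ℕ) (M : Set (Sym2 (PapVert (2 * (n + n))))) (J : ℕ) : ℕ :=
  M.indicator 1 s(pu _ (2 * J + 2), pu _ (2 * J + 3)) +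
    M.indicator 1 s(pv _ (2 * J + 1), pv _ (innerNext n J))

section PerfectMatching

variable {n : ℕ} {M : Set (Sym2 (PapVert (2 * (n + n))))}

theorem indicator_leftPorts_eq_rightFlow (hM : IsPerfMatching (papillon n n) M) {J : ℕ}
    (hJ : J < 2 * n) :
    M.indicator 1 s(pu _ (2 * J + 1), pu _ (2 * J)) +
      M.indicator 1 s(pv _ (2 * J + 2), pv _ (innerPrev n J)) = rightFlow n M J :=
  (isSquarePole_papillon hJ).indicator_left_eq_right hM

theorem rightFlow_succ (hM : IsPerfMatching (papillon n n) M) {K : ℕ} (hK : K + 1 < 2 * n)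
    (hKn : K + 1 ≠ n) : rightFlow n M (K + 1) = rightFlow n M K := by
  obtain ⟨hu, hv⟩ := leftPorts_succ_eq_rightPorts hK hKn
  rw [← indicator_leftPorts_eq_rightFlow hM hK, hu, hv, rightFlow]

theorem rightFlow_eq_of_le (hM : IsPerfMatching (papillon n n) M) {K K' : ℕ} (hKK' : K ≤ K')
    (hK' : K' < 2 * n) (hhalf : K' < n ∨ n ≤ K) : rightFlow n M K' = rightFlow n M K := by
  induction K', hKK' using Nat.le_induction with
  | base => rfl
  | succ K' hKK' ih =>
    rw [rightFlow_succ hM hK' (by omega), ih (by omega) (by omega)]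

theorem ncard_inter_boundaryT (hM : IsPerfMatching (papillon n n) M) {J : ℕ} (hJ : J < 2 * n) :
    (M ∩ boundaryT n (J + 1)).ncard = 2 * rightFlow n M J := by
  rw [boundaryT, Tverts_succ]
  exact (isSquarePole_papillon hJ).ncard_inter_boundary hM

theorem ncard_inter_Xcut (hM : IsPerfMatching (papillon n n) M) (hn : 1 ≤ n) :
    (M ∩ Xcut n).ncard = 2 * rightFlow n M 0 ∧ (M ∩ Xcut n).ncard = 2 * rightFlow n M n := by
  obtain ⟨ha₀, ha₁, hb₀, hb₁, hc₀, hc₁, hd₀, hd₁⟩ := Xcut_edges_eq_ports hn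
  have h₀ := indicator_leftPorts_eq_rightFlow hM (J := 0) (by omega)
  have hₙ := indicator_leftPorts_eq_rightFlow hM (J := n) (by omega)
  have e₀ := rightFlow_eq_of_le hM (Nat.zero_le (n - 1)) (by omega) (Or.inl (by omega))
  have eₙ := rightFlow_eq_of_le hM (show n ≤ 2 * n - 1 by omega) (by omega) (Or.inr le_rfl)
  rw [← ha₀, ← hc₀] at h₀
  rw [← hd₁, ← hc₁] at hₙ
  rw [rightFlow, ← hd₀, ← hb₀] at e₀
  rw [rightFlow, ← ha₁, ← hb₁] at eₙ
  rw [ncard_inter_Xcut_eq M hn]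
  omega

end PerfectMatching

theorem statement9_general (n : ℕ) (M : Set (Sym2 (PapVert (2 * (n + n)))))
    (hM : IsPerfMatching (papillon n n) M) (j : ℕ) (hj1 : 1 ≤ j) (hj2 : j ≤ 2 * n) :
    (M ∩ boundaryT n j).ncard = (M ∩ Xcut n).ncard := by
  obtain ⟨J, rfl⟩ : ∃ J, j = J + 1 := ⟨j - 1, by omega⟩
  obtain ⟨hX₀, hXₙ⟩ := ncard_inter_Xcut hM (by omega)
  rw [ncard_inter_boundaryT hM (by omega)]
  rcases lt_or_ge J n with hJn | hJn
  · rw [hX₀, rightFlow_eq_of_le hM (Nat.zero_le J) (by omega) (Or.inl hJn)]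
  · rw [hXₙ, rightFlow_eq_of_le hM hJn (by omega) (Or.inr le_rfl)]

/-- For every perfect matching `M` of the balanced papillon graph `P_n` and every
`j ∈ {1, …, 2n}`, `|M ∩ ∂T_j| = |M ∩ X|`, where `X` is the principal 4-edge-cut. -/
theorem statement9 (n : ℕ) (hn : 1 ≤ n) (M : Set (Sym2 (PapVert (2 * (n + n)))))
    (hM : IsPerfMatching (papillon n n) M) (j : ℕ) (hj1 : 1 ≤ j) (hj2 : j ≤ 2 * n) :
    (M ∩ boundaryT n j).ncard = (M ∩ Xcut n).ncard :=
  statement9_general n M hM j hj1 hj2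
end

section
/- Let n be a positive integer, let M be a perfect matching of the balanced papillon graph P_n, and let X = {a, b, c, d} be its principal 4-edge-cut. If |M ∩ X| = 2, then M ∩ X = {a, d} or M ∩ X = {b, c}. -/
open SimpleGraph


/-!
Group the vertices of `P_n` into the `2n` blocks `{u_{2k+1}, u_{2k+2}, v_{2k+1}, v_{2k+2}}`.
Each block induces the 4-cycle `u_{2k+1} u_{2k+2} v_{2k+2} v_{2k+1}`, and each of its vertices
has exactly one neighbour outside it: two of these boundary edges leave to the left and two to
the right. The 4-cycle is bipartite with sides `{u_{2k+1}, v_{2k+2}}` (attached to the left) and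
`{u_{2k+2}, v_{2k+1}}` (attached to the right), so a perfect matching uses as many boundary
edges on the left of a block as on its right. The blocks `1, …, n` form a chain from `{a, c}` to
`{d, b}` and the blocks `n + 1, …, 2n` one from `{d, c}` to `{a, b}`, whence
`|M ∩ {a, c}| = |M ∩ {d, b}|` and `|M ∩ {d, c}| = |M ∩ {a, b}|`, i.e. `a ∈ M ↔ d ∈ M` and
`b ∈ M ↔ c ∈ M`.
-/

theorem ZMod.natCast_eq_natCast_iff_of_lt_two_mul_s10 {N x y : ℕ} (hx : x < 2 * N) (hy : y < 2 * N) :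
    (x : ZMod N) = y ↔ x = y ∨ x = y + N ∨ y = x + N := by
  rw [ZMod.natCast_eq_natCast_iff']
  have hx' := Nat.div_add_mod x N
  have hy' := Nat.div_add_mod y N
  have hqx : x / N < 2 := Nat.div_lt_of_lt_mul (by linarith)
  have hqy : y / N < 2 := Nat.div_lt_of_lt_mul (by linarith)
  constructor
  · intro h
    interval_cases hqx' : x / N <;> interval_cases hqy' : y / N <;> omega
  · rintro (rfl | rfl | rfl) <;> simp

def ExactlyOne (p q r : Prop) : Prop :=
  (p ∨ q ∨ r) ∧ ¬(p ∧ q) ∧ ¬(p ∧ r) ∧ ¬(q ∧ r)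

/-- `h₁, …, h₄` are the matching constraints at the vertices `x₁, x₂, y₁, y₂` of a 4-cycle
`x₁ x₂ y₂ y₁` with external edges `L₁, R₁, R₂, L₂` and internal edges `A = x₁x₂`, `B = x₂y₂`,
`C = y₁y₂`, `D = x₁y₁`. -/
theorem ExactlyOne.fourCycle_balance {L₁ L₂ R₁ R₂ A B C D : Prop}
    (h₁ : ExactlyOne L₁ A D) (h₂ : ExactlyOne R₁ A B) (h₃ : ExactlyOne R₂ D C)
    (h₄ : ExactlyOne L₂ B C) : (L₁ ∧ L₂ ↔ R₁ ∧ R₂) ∧ (L₁ ∨ L₂ ↔ R₁ ∨ R₂) := by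
  unfold ExactlyOne at *
  by_cases A <;> by_cases B <;> by_cases C <;> by_cases D <;> simp_all

section SameCount

variable {α : Type*} {M : Set α}

def SameCount (M : Set α) (e₁ e₂ f₁ f₂ : α) : Prop :=
  (e₁ ∈ M ∧ e₂ ∈ M ↔ f₁ ∈ M ∧ f₂ ∈ M) ∧ (e₁ ∈ M ∨ e₂ ∈ M ↔ f₁ ∈ M ∨ f₂ ∈ M)

theorem SameCount.trans {e₁ e₂ f₁ f₂ g₁ g₂ : α} (h : SameCount M e₁ e₂ f₁ f₂)
    (h' : SameCount M f₁ f₂ g₁ g₂) : SameCount M e₁ e₂ g₁ g₂ :=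
  ⟨h.1.trans h'.1, h.2.trans h'.2⟩

theorem SameCount.mem_iff_of_cross {a b c d : α} (h₁ : SameCount M a c d b)
    (h₂ : SameCount M d c a b) : (a ∈ M ↔ d ∈ M) ∧ (b ∈ M ↔ c ∈ M) := by
  unfold SameCount at h₁ h₂
  tauto

end SameCount

theorem Set.inter_eq_pair_or_pair_of_ncard_eq_two {α : Type*} {M : Set α} {a b c d : α}
    (hab : a ≠ b) (hac : a ≠ c) (hbc : b ≠ c) (had : a ∈ M ↔ d ∈ M) (hbc' : b ∈ M ↔ c ∈ M)
    (h2 : (M ∩ {a, b, c, d}).ncard = 2) :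
    M ∩ {a, b, c, d} = {a, d} ∨ M ∩ {a, b, c, d} = {b, c} := by
  by_cases ha : a ∈ M <;> by_cases hb : b ∈ M
  · have habc : ({a, b, c} : Set α) ⊆ M ∩ {a, b, c, d} := by
      simp [Set.insert_subset_iff, ha, hb, hbc'.1 hb]
    have := Set.ncard_le_ncard habc (Set.toFinite _)
    rw [h2, Set.ncard_eq_three.2 ⟨a, b, c, hab, hac, hbc, rfl⟩] at this
    omega
  · left
    ext e
    simp only [Set.mem_inter_iff, Set.mem_insert_iff, Set.mem_singleton_iff]
    aesop
  · right
    ext e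
    simp only [Set.mem_inter_iff, Set.mem_insert_iff, Set.mem_singleton_iff]
    aesop
  · have : M ∩ {a, b, c, d} = ∅ := by
      ext e
      simp only [Set.mem_inter_iff, Set.mem_insert_iff, Set.mem_singleton_iff]
      aesop
    simp [this] at h2

section Matching

variable {V : Type*} {G : SimpleGraph V} {M : Set (Sym2 V)}

theorem IsPerfMatching.exactlyOne (hM : IsPerfMatching G M) {x a b c : V}
    (hx : G.neighborSet x ⊆ {a, b, c}) (habc : [a, b, c].Nodup) :
    ExactlyOne (s(x, a) ∈ M) (s(x, b) ∈ M) (s(x, c) ∈ M) := by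
  obtain ⟨e, ⟨heM, hxe⟩, huniq⟩ := hM.2 x
  have hcongr {y z : V} (hy : s(x, y) ∈ M) (hz : s(x, z) ∈ M) : y = z :=
    Sym2.congr_right.1 ((huniq _ ⟨hy, Sym2.mem_mk_left x y⟩).trans
      (huniq _ ⟨hz, Sym2.mem_mk_left x z⟩).symm)
  obtain ⟨w, rfl⟩ := Sym2.mem_iff_exists.1 hxe
  have hw : w ∈ ({a, b, c} : Set V) := hx ((SimpleGraph.mem_edgeSet G).1 (hM.1 heM))
  simp only [List.nodup_cons, List.mem_cons, List.not_mem_nil, or_false, not_or] at habc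
  obtain ⟨⟨hab, hac⟩, hbc, -⟩ := habc
  refine ⟨?_, fun h => hab (hcongr h.1 h.2), fun h => hac (hcongr h.1 h.2),
    fun h => hbc (hcongr h.1 h.2)⟩
  rcases hw with rfl | rfl | rfl <;> simp [heM]

theorem IsPerfMatching.sameCount_of_fourCycle (hM : IsPerfMatching G M)
    {x₁ x₂ y₁ y₂ p₁ p₂ q₁ q₂ : V}
    (hx₁ : G.neighborSet x₁ ⊆ {p₁, x₂, y₁}) (hx₂ : G.neighborSet x₂ ⊆ {p₂, x₁, y₂})
    (hy₁ : G.neighborSet y₁ ⊆ {q₁, x₁, y₂}) (hy₂ : G.neighborSet y₂ ⊆ {q₂, x₂, y₁})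
    (hpx₁ : [p₁, x₂, y₁].Nodup) (hpx₂ : [p₂, x₁, y₂].Nodup)
    (hqy₁ : [q₁, x₁, y₂].Nodup) (hqy₂ : [q₂, x₂, y₁].Nodup) :
    SameCount M s(x₁, p₁) s(y₂, q₂) s(x₂, p₂) s(y₁, q₁) := by
  have h₂ := hM.exactlyOne hx₂ hpx₂
  have h₃ := hM.exactlyOne hy₁ hqy₁
  have h₄ := hM.exactlyOne hy₂ hqy₂
  rw [Sym2.eq_swap (a := x₂) (b := x₁)] at h₂
  rw [Sym2.eq_swap (a := y₁) (b := x₁)] at h₃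
  rw [Sym2.eq_swap (a := y₂) (b := x₂), Sym2.eq_swap (a := y₂) (b := y₁)] at h₄
  exact (hM.exactlyOne hx₁ hpx₁).fourCycle_balance h₂ h₃ h₄

end Matching

namespace Papillon

open ZMod (natCast_eq_natCast_iff_of_lt_two_mul_s10)

theorem neighborSet_outer_subset (r l : ℕ) (z : ZMod (2 * (r + l))) :
    (papillon r l).neighborSet (false, z) ⊆ {(false, z - 1), (false, z + 1), (true, z)} := by
  intro w hw
  obtain ⟨he, -⟩ := (fromEdgeSet_adj _).1 hw
  rcases he with ⟨i, -, -, he⟩ | he | ⟨i, -, -, he⟩ | ⟨i, -, -, he⟩ | ⟨i, -, -, -, he⟩ | he | he <;>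
    rcases Sym2.eq_iff.1 he with ⟨h, rfl⟩ | ⟨h, rfl⟩ <;>
    simp_all [pu, pv]

theorem neighborSet_pu_succ_subset (r l i : ℕ) :
    (papillon r l).neighborSet (pu _ (i + 1)) ⊆ {pu _ i, pu _ (i + 2), pv _ (i + 1)} := by
  convert neighborSet_outer_subset r l ((i + 1 : ℕ) : ZMod _) using 3 <;>
    simp only [pu, pv, Prod.mk.injEq, true_and] <;> push_cast <;> ring

variable (n : ℕ)

/-- Block `k` (counted from `0`) of `P_n` is the 4-cycle `u_{2k+1} u_{2k+2} v_{2k+2} v_{2k+1}`;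
`v_{innerLeft n k}` and `v_{innerRight n k}` are the neighbours of `v_{2k+2}` and `v_{2k+1}` outside
it. The two cases `k = 0, n` of `innerLeft` come from the edge `c`, and those of `innerRight` from
the edge `b`. -/
def innerLeft (k : ℕ) : ℕ := if k = 0 then 2 * n + 2 else if k = n then 2 else 2 * k - 1

def innerRight (k : ℕ) : ℕ :=
  if k = n - 1 then 4 * n - 1 else if k = 2 * n - 1 then 2 * n - 1 else 2 * k + 4

def leftOuter (k : ℕ) : Sym2 (PapVert (2 * (n + n))) := s(pu _ (2 * k + 1), pu _ (2 * k))

def leftInner (k : ℕ) : Sym2 (PapVert (2 * (n + n))) := s(pv _ (2 * k + 2), pv _ (innerLeft n k))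

def rightOuter (k : ℕ) : Sym2 (PapVert (2 * (n + n))) := s(pu _ (2 * k + 2), pu _ (2 * k + 3))

def rightInner (k : ℕ) : Sym2 (PapVert (2 * (n + n))) :=
  s(pv _ (2 * k + 1), pv _ (innerRight n k))

theorem neighborSet_pv_odd_subset {k : ℕ} (hk : k < 2 * n) :
    (papillon n n).neighborSet (pv _ (2 * k + 1)) ⊆
      {pv _ (innerRight n k), pu _ (2 * k + 1), pv _ (2 * k + 2)} := by
  intro w hw
  obtain ⟨he, -⟩ := (fromEdgeSet_adj _).1 hw
  rcases he with ⟨i, -, -, he⟩ | he | ⟨i, -, hi, he⟩ | ⟨i, hi₀, hi, he⟩ | ⟨i, hi₀, hi, hin, he⟩ |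
      he | he <;>
    rcases Sym2.eq_iff.1 he with ⟨h, rfl⟩ | ⟨h, rfl⟩ <;>
    simp only [pu, pv, innerRight, Prod.mk.injEq, Set.mem_insert_iff, Set.mem_singleton_iff,
      Bool.true_eq_false, true_and, false_and, false_or, min_self] at h ⊢ <;>
    split_ifs <;>
    simp (disch := omega) only [natCast_eq_natCast_iff_of_lt_two_mul_s10, true_or] at h ⊢ <;> omega

theorem neighborSet_pv_even_subset {k : ℕ} (hk : k < 2 * n) :
    (papillon n n).neighborSet (pv _ (2 * k + 2)) ⊆
      {pv _ (innerLeft n k), pu _ (2 * k + 2), pv _ (2 * k + 1)} := by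
  intro w hw
  obtain ⟨he, -⟩ := (fromEdgeSet_adj _).1 hw
  rcases he with ⟨i, -, -, he⟩ | he | ⟨i, -, hi, he⟩ | ⟨i, hi₀, hi, he⟩ | ⟨i, hi₀, hi, hin, he⟩ |
      he | he <;>
    rcases Sym2.eq_iff.1 he with ⟨h, rfl⟩ | ⟨h, rfl⟩ <;>
    simp only [pu, pv, innerLeft, Prod.mk.injEq, Set.mem_insert_iff, Set.mem_singleton_iff,
      Bool.true_eq_false, true_and, false_and, false_or, min_self] at h ⊢ <;>
    split_ifs <;>
    simp (disch := omega) only [natCast_eq_natCast_iff_of_lt_two_mul_s10, true_or] at h ⊢ <;> omega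

variable {n}

theorem sameCount_block {M : Set (Sym2 (PapVert (2 * (n + n))))}
    (hM : IsPerfMatching (papillon n n) M) {k : ℕ} (hk : k < 2 * n) :
    SameCount M (leftOuter n k) (leftInner n k) (rightOuter n k) (rightInner n k) := by
  refine hM.sameCount_of_fourCycle (neighborSet_pu_succ_subset n n (2 * k)) ?_
    (neighborSet_pv_odd_subset n hk) (neighborSet_pv_even_subset n hk) ?_ ?_ ?_ ?_
  · rw [Set.insert_comm]
    exact neighborSet_pu_succ_subset n n (2 * k + 1)
  all_goals
    simp only [List.nodup_cons, List.mem_cons, List.not_mem_nil, List.nodup_nil, or_false,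
      not_or, pu, pv, innerLeft, innerRight, Prod.mk.injEq, Bool.true_eq_false,
      Bool.false_eq_true, false_and, true_and, not_false_eq_true, and_true]
    (try split_ifs) <;> simp (disch := omega) only [natCast_eq_natCast_iff_of_lt_two_mul_s10] <;> omega

theorem rightOuter_eq_leftOuter_succ (k : ℕ) : rightOuter n k = leftOuter n (k + 1) := by
  rw [rightOuter, leftOuter, Sym2.eq_swap]
  ring_nf

theorem rightInner_eq_leftInner_succ {k : ℕ} (hk : k + 1 < 2 * n) (hkn : k + 1 ≠ n) :
    rightInner n k = leftInner n (k + 1) := by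
  rw [rightInner, leftInner, innerRight, innerLeft, if_neg (by omega), if_neg (by omega),
    if_neg (by omega), if_neg hkn, Sym2.eq_swap, show 2 * (k + 1) - 1 = 2 * k + 1 by omega,
    show 2 * (k + 1) + 2 = 2 * k + 4 by ring]

theorem sameCount_of_le {M : Set (Sym2 (PapVert (2 * (n + n))))}
    (hM : IsPerfMatching (papillon n n) M) {i j : ℕ} (hij : i ≤ j) (hj : j < 2 * n)
    (hcut : ∀ k, i ≤ k → k < j → k + 1 ≠ n) :
    SameCount M (leftOuter n i) (leftInner n i) (rightOuter n j) (rightInner n j) := by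
  induction j, hij using Nat.le_induction with
  | base => exact sameCount_block hM hj
  | succ j hij ih =>
    refine (ih (by omega) fun k hk hkj => hcut k hk (by omega)).trans ?_
    rw [rightOuter_eq_leftOuter_succ, rightInner_eq_leftInner_succ hj (hcut j hij (by omega))]
    exact sameCount_block hM hj

theorem sameCount_first_half (hn : 1 ≤ n) {M : Set (Sym2 (PapVert (2 * (n + n))))}
    (hM : IsPerfMatching (papillon n n) M) :
    SameCount M s(pu _ 1, pu _ (4 * n)) s(pv _ 2, pv _ (2 * n + 2))
      s(pu _ (2 * n), pu _ (2 * n + 1)) s(pv _ (2 * n - 1), pv _ (4 * n - 1)) := by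
  convert sameCount_of_le hM (Nat.zero_le (n - 1)) (by omega) (fun k _ hk => by omega)
    using 2 <;>
    simp only [leftOuter, leftInner, rightOuter, rightInner, innerLeft, innerRight, Sym2.eq_iff,
      pu, pv, Prod.mk.injEq, true_and] <;>
    (try split_ifs) <;>
    simp (disch := omega) only [natCast_eq_natCast_iff_of_lt_two_mul_s10, true_or, and_true] <;>
    omega

theorem sameCount_second_half (hn : 1 ≤ n) {M : Set (Sym2 (PapVert (2 * (n + n))))}
    (hM : IsPerfMatching (papillon n n) M) :
    SameCount M s(pu _ (2 * n), pu _ (2 * n + 1)) s(pv _ 2, pv _ (2 * n + 2))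
      s(pu _ 1, pu _ (4 * n)) s(pv _ (2 * n - 1), pv _ (4 * n - 1)) := by
  convert sameCount_of_le hM (i := n) (j := 2 * n - 1) (by omega) (by omega)
    (fun k _ hk => by omega) using 2 <;>
    simp only [leftOuter, leftInner, rightOuter, rightInner, innerLeft, innerRight, Sym2.eq_iff,
      pu, pv, Prod.mk.injEq, true_and] <;>
    (try split_ifs) <;>
    simp (disch := omega) only [natCast_eq_natCast_iff_of_lt_two_mul_s10, or_true, true_and,
      and_true] <;>
    omega

end Papillon

/-- If a perfect matching `M` of the balanced papillon graph `P_n` meets the principal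
4-edge-cut `X = {a, b, c, d}` in exactly two edges, then `M ∩ X = {a, d}` or
`M ∩ X = {b, c}`. -/
theorem statement10 (n : ℕ) (hn : 1 ≤ n) (M : Set (Sym2 (PapVert (2 * (n + n)))))
    (hM : IsPerfMatching (papillon n n) M) (h2 : (M ∩ Xcut n).ncard = 2) :
    M ∩ Xcut n = {s(pu (2 * (n + n)) 1, pu (2 * (n + n)) (4 * n)),
                  s(pu (2 * (n + n)) (2 * n), pu (2 * (n + n)) (2 * n + 1))} ∨
    M ∩ Xcut n = {s(pv (2 * (n + n)) (2 * n - 1), pv (2 * (n + n)) (4 * n - 1)),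
                  s(pv (2 * (n + n)) 2, pv (2 * (n + n)) (2 * n + 2))} := by
  obtain ⟨had, hbc⟩ := (Papillon.sameCount_first_half hn hM).mem_iff_of_cross
    (Papillon.sameCount_second_half hn hM)
  have hb_ne_c :
      s(pv (2 * (n + n)) (2 * n - 1), pv _ (4 * n - 1)) ≠ s(pv _ 2, pv _ (2 * n + 2)) := by
    simp only [ne_eq, Sym2.eq_iff, pv, Prod.mk.injEq, true_and]
    simp (disch := omega) only [ZMod.natCast_eq_natCast_iff_of_lt_two_mul_s10]
    omega
  exact Set.inter_eq_pair_or_pair_of_ncard_eq_two (by simp [pu, pv]) (by simp [pu, pv]) hb_ne_c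
    had hbc h2
end

section
/- Let n be a positive integer, let M be a perfect matching of the balanced papillon graph P_n, and let X be its principal 4-edge-cut. If |M ∩ X| = 2, then for every j ∈ {1,…,2n} the set M ∩ ∂T_j has exactly two edges, and these two edges are neither the pair consisting of the edge of ∂T_j incident to u_{2j−1} together with the edge of ∂T_j incident to v_{2j}, nor the pair consisting of the edge of ∂T_j incident to u_{2j} together with the edge of ∂T_j incident to v_{2j−1}. -/
open SimpleGraph


/-!
Each `T_j` is the 4-cycle `u_{2j-1} u_{2j} v_{2j} v_{2j-1}` with one further edge at every
vertex. Its colour classes `{u_{2j-1}, v_{2j}}` and `{u_{2j}, v_{2j-1}}` carry the left and the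
right ports of `T_j`. Matching edges inside `T_j` join the two classes, so a perfect matching uses
as many left as right ports of `T_j`. The right ports of `T_j` are the left ports of `T_{j+1}`,
except across `X`, which consists of the left ports `{a, c}` of `T_1` and `{d, c}` of `T_{n+1}`
together with the right ports `{d, b}` of `T_n` and `{a, b}` of `T_{2n}`. Propagating along the
two halves gives `|M ∩ {a, c}| = |M ∩ {b, d}|` and `|M ∩ {c, d}| = |M ∩ {a, b}|`, so
`|M ∩ X| = 2` forces exactly one matched left port and one matched right port at every `T_j`.
-/

theorem ZMod.natCast_eq_natCast_iff_of_lt {c a b : ℕ} (ha : a < 2 * c) (hb : b < 2 * c) :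
    (a : ZMod c) = b ↔ a = b ∨ a = b + c ∨ b = a + c := by
  have hmod : ∀ x < 2 * c, x % c = if x < c then x else x - c := fun x hx => by
    split_ifs with h
    · exact Nat.mod_eq_of_lt h
    · rw [Nat.mod_eq_sub_mod (by omega), Nat.mod_eq_of_lt (by omega)]
  rw [ZMod.natCast_eq_natCast_iff', hmod a ha, hmod b hb]
  split_ifs <;> omega

open Classical in
theorem Set.ncard_inter_pair {α : Type*} (s : Set α) {x y : α} (h : x ≠ y) :
    (s ∩ {x, y}).ncard = (if x ∈ s then 1 else 0) + (if y ∈ s then 1 else 0) := by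
  by_cases hx : x ∈ s <;> by_cases hy : y ∈ s <;>
    simp [hx, hy, Set.inter_insert_of_mem, Set.inter_insert_of_notMem, h]

section PerfectMatching

variable {V : Type*} {G : SimpleGraph V} {M : Set (Sym2 V)}

theorem IsPerfMatching.exists_partner (hM : IsPerfMatching G M) :
    ∃ f : V → V, (∀ v w, s(v, w) ∈ M ↔ f v = w) ∧ ∀ v, G.Adj v (f v) := by
  have hex : ∀ v, ∃ w, s(v, w) ∈ M := fun v => by
    obtain ⟨e, ⟨he, hv⟩, -⟩ := hM.2 v
    obtain ⟨w, rfl⟩ := Sym2.mem_iff_exists.1 hv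
    exact ⟨w, he⟩
  choose f hf using hex
  refine ⟨f, fun v w => ⟨fun h => ?_, fun h => h ▸ hf v⟩, fun v => hM.1 (hf v)⟩
  exact Sym2.congr_right.1 <|
    (hM.2 v).unique ⟨hf v, Sym2.mem_mk_left _ _⟩ ⟨h, Sym2.mem_mk_left _ _⟩

namespace SimpleGraph

def edgeBoundary (G : SimpleGraph V) (T : Set V) : Set (Sym2 V) :=
  {e | e ∈ G.edgeSet ∧ ∃ x y, e = s(x, y) ∧ x ∈ T ∧ y ∉ T}

theorem eq_of_mem_edgeBoundary {T : Set V} {x x' : V} (hxT : x ∈ T)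
    (hN : ∀ w, G.Adj x w → w ∈ T ∨ w = x') {e : Sym2 V} (he : e ∈ G.edgeBoundary T)
    (hx : x ∈ e) : e = s(x, x') := by
  obtain ⟨hE, y, z, rfl, hy, hz⟩ := he
  rcases Sym2.mem_iff.1 hx with rfl | rfl
  · rcases hN z hE with h | rfl
    · exact absurd h hz
    · rfl
  · exact absurd hxT hz

/-- `a b d c` is a 4-cycle, with colour classes `{a, d}` and `{b, c}`, and `x'` is the only
possible neighbour of `x` outside it. -/
structure IsFourPole (G : SimpleGraph V) (a b c d a' b' c' d' : V) : Prop where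
  adj_a : ∀ w, G.Adj a w → w = b ∨ w = c ∨ w = a'
  adj_b : ∀ w, G.Adj b w → w = a ∨ w = d ∨ w = b'
  adj_c : ∀ w, G.Adj c w → w = a ∨ w = d ∨ w = c'
  adj_d : ∀ w, G.Adj d w → w = b ∨ w = c ∨ w = d'
  nodup : [a, b, c, d].Nodup
  disjoint : Disjoint ({a, b, c, d} : Set V) {a', b', c', d'}

namespace IsFourPole

variable {a b c d a' b' c' d' : V} (hP : G.IsFourPole a b c d a' b' c' d')
include hP

theorem ncard_inter_left_eq_right (hM : IsPerfMatching G M) :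
    (M ∩ {s(a, a'), s(d, d')}).ncard = (M ∩ {s(b, b'), s(c, c')}).ncard := by
  classical
  obtain ⟨f, hfM, hadj⟩ := hM.exists_partner
  have hinv : ∀ v, f (f v) = v := fun v => (hfM _ _).1 (Sym2.eq_swap ▸ (hfM _ _).2 rfl)
  have hnd := hP.nodup
  have hout := Set.disjoint_left.1 hP.disjoint
  simp only [List.nodup_cons, List.mem_cons, List.not_mem_nil, or_false, not_or] at hnd
  simp only [Set.mem_insert_iff, Set.mem_singleton_iff, not_or, forall_eq_or_imp,
    forall_eq] at hout
  rw [Set.ncard_inter_pair _ (by grind), Set.ncard_inter_pair _ (by grind)]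
  simp only [hfM]
  have := hP.adj_a _ (hadj a)
  have := hP.adj_b _ (hadj b)
  have := hP.adj_c _ (hadj c)
  have := hP.adj_d _ (hadj d)
  grind

theorem nodup_ports : [s(a, a'), s(b, b'), s(c, c'), s(d, d')].Nodup := by
  have hnd := hP.nodup
  have hout := Set.disjoint_left.1 hP.disjoint
  simp only [List.nodup_cons, List.mem_cons, List.not_mem_nil, or_false, not_or] at hnd ⊢
  simp only [Set.mem_insert_iff, Set.mem_singleton_iff, not_or, forall_eq_or_imp,
    forall_eq] at hout
  grind

theorem eq_mk_of_mem_edgeBoundary {e : Sym2 V} (he : e ∈ G.edgeBoundary {a, b, c, d}) :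
    (a ∈ e → e = s(a, a')) ∧ (b ∈ e → e = s(b, b')) ∧ (c ∈ e → e = s(c, c')) ∧
      (d ∈ e → e = s(d, d')) :=
  ⟨eq_of_mem_edgeBoundary (by simp)
      (fun w h => by rcases hP.adj_a w h with rfl | rfl | rfl <;> simp) he,
    eq_of_mem_edgeBoundary (by simp)
      (fun w h => by rcases hP.adj_b w h with rfl | rfl | rfl <;> simp) he,
    eq_of_mem_edgeBoundary (by simp)
      (fun w h => by rcases hP.adj_c w h with rfl | rfl | rfl <;> simp) he,
    eq_of_mem_edgeBoundary (by simp)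
      (fun w h => by rcases hP.adj_d w h with rfl | rfl | rfl <;> simp) he⟩

theorem inter_edgeBoundary (hM : M ⊆ G.edgeSet) :
    M ∩ G.edgeBoundary {a, b, c, d} =
      M ∩ {s(a, a'), s(d, d')} ∪ M ∩ {s(b, b'), s(c, c')} := by
  ext e
  constructor
  · rintro ⟨heM, he⟩
    obtain ⟨ha, hb, hc, hd⟩ := hP.eq_mk_of_mem_edgeBoundary he
    obtain ⟨-, x, y, rfl, hx, -⟩ := he
    have hxe := Sym2.mem_mk_left x y
    simp only [Set.mem_insert_iff, Set.mem_singleton_iff] at hx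
    rcases hx with rfl | rfl | rfl | rfl
    exacts [.inl ⟨heM, .inl (ha hxe)⟩, .inr ⟨heM, .inl (hb hxe)⟩, .inr ⟨heM, .inr (hc hxe)⟩,
      .inl ⟨heM, .inr (hd hxe)⟩]
  · have hout := Set.disjoint_right.1 hP.disjoint
    rintro (⟨heM, rfl | rfl⟩ | ⟨heM, rfl | rfl⟩) <;>
      exact ⟨heM, hM heM, _, _, rfl, by simp, hout (by simp)⟩

theorem matching_boundary_of_ncard_inter_left_eq_one (hM : IsPerfMatching G M)
    (hL : (M ∩ {s(a, a'), s(d, d')}).ncard = 1) :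
    (M ∩ G.edgeBoundary {a, b, c, d}).ncard = 2 ∧
      ¬((∃ e ∈ M ∩ G.edgeBoundary {a, b, c, d}, a ∈ e) ∧
        ∃ e ∈ M ∩ G.edgeBoundary {a, b, c, d}, d ∈ e) ∧
      ¬((∃ e ∈ M ∩ G.edgeBoundary {a, b, c, d}, b ∈ e) ∧
        ∃ e ∈ M ∩ G.edgeBoundary {a, b, c, d}, c ∈ e) := by
  classical
  have hR := hP.ncard_inter_left_eq_right hM ▸ hL
  have hnd := hP.nodup_ports
  simp only [List.nodup_cons, List.mem_cons, List.not_mem_nil, or_false, not_or] at hnd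
  refine ⟨?_, ?_, ?_⟩
  · rw [hP.inter_edgeBoundary hM.1, Set.ncard_union_eq, hL, hR]
    exact Set.disjoint_left.2 fun e ⟨_, he⟩ ⟨_, he'⟩ => by
      rcases he with rfl | rfl <;> rcases he' with h | h <;> grind
  · rintro ⟨⟨e, ⟨heM, he⟩, hae⟩, ⟨e', ⟨he'M, he'⟩, hde'⟩⟩
    rw [(hP.eq_mk_of_mem_edgeBoundary he).1 hae] at heM
    rw [(hP.eq_mk_of_mem_edgeBoundary he').2.2.2 hde'] at he'M
    rw [Set.ncard_inter_pair _ (by grind)] at hL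
    simp [heM, he'M] at hL
  · rintro ⟨⟨e, ⟨heM, he⟩, hbe⟩, ⟨e', ⟨he'M, he'⟩, hce'⟩⟩
    rw [(hP.eq_mk_of_mem_edgeBoundary he).2.1 hbe] at heM
    rw [(hP.eq_mk_of_mem_edgeBoundary he').2.2.1 hce'] at he'M
    rw [Set.ncard_inter_pair _ (by grind)] at hR
    simp [heM, he'M] at hR

end IsFourPole

end SimpleGraph

end PerfectMatching

@[simp] theorem pu_eq_pu_iff {N a b : ℕ} : pu N a = pu N b ↔ (a : ZMod N) = b := by simp [pu]
@[simp] theorem pv_eq_pv_iff {N a b : ℕ} : pv N a = pv N b ↔ (a : ZMod N) = b := by simp [pv]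
@[simp] theorem pu_ne_pv {N a b : ℕ} : pu N a ≠ pv N b := by simp [pu, pv]
@[simp] theorem pv_ne_pu {N a b : ℕ} : pv N a ≠ pu N b := by simp [pu, pv]

/-- The neighbour of `v_{2j-1}` outside `T_j`. The exceptions `j = n` and `j = 2n` are the
cut edge `b`, written with indices read modulo `4n`. -/
def vNext (n j : ℕ) : PapVert (2 * (n + n)) :=
  if j = n ∨ j = 2 * n then pv (2 * (n + n)) (2 * j - 1 + 2 * n) else pv (2 * (n + n)) (2 * j + 2)

/-- The neighbour of `v_{2j}` outside `T_j`. The exceptions `j = 1` and `j = n + 1` are the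
cut edge `c`, written with indices read modulo `4n`. -/
def vPrev (n j : ℕ) : PapVert (2 * (n + n)) :=
  if j = 1 ∨ j = n + 1 then pv (2 * (n + n)) (2 * j + 2 * n) else pv (2 * (n + n)) (2 * j - 3)

def leftPorts (n j : ℕ) : Set (Sym2 (PapVert (2 * (n + n)))) :=
  {s(pu (2 * (n + n)) (2 * j - 1), pu (2 * (n + n)) (2 * j - 2)),
    s(pv (2 * (n + n)) (2 * j), vPrev n j)}

def rightPorts (n j : ℕ) : Set (Sym2 (PapVert (2 * (n + n)))) :=
  {s(pu (2 * (n + n)) (2 * j), pu (2 * (n + n)) (2 * j + 1)),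
    s(pv (2 * (n + n)) (2 * j - 1), vNext n j)}

section Papillon

variable {n j : ℕ}

theorem isFourPole_papillon (hj1 : 1 ≤ j) (hj2 : j ≤ 2 * n) :
    (papillon n n).IsFourPole
      (pu (2 * (n + n)) (2 * j - 1)) (pu (2 * (n + n)) (2 * j))
      (pv (2 * (n + n)) (2 * j - 1)) (pv (2 * (n + n)) (2 * j))
      (pu (2 * (n + n)) (2 * j - 2)) (pu (2 * (n + n)) (2 * j + 1)) (vNext n j) (vPrev n j) := by
  constructor
  case nodup =>
    simp (disch := omega) only [List.nodup_cons, List.mem_cons, List.not_mem_nil, or_false,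
      not_or, pu_eq_pu_iff, pv_eq_pv_iff, pu_ne_pv, ZMod.natCast_eq_natCast_iff_of_lt,
      not_false_eq_true, and_self, and_true, List.nodup_nil, true_and]
    omega
  case disjoint =>
    unfold vNext vPrev
    split_ifs <;>
    simp (disch := omega) only [Set.disjoint_insert_left, Set.disjoint_singleton_left,
      Set.mem_insert_iff, Set.mem_singleton_iff, pu_eq_pu_iff, pv_eq_pv_iff, pu_ne_pv, pv_ne_pu,
      ZMod.natCast_eq_natCast_iff_of_lt, false_or, or_false, not_or] <;>
    omega
  all_goals
    intro w h
    simp only [papillon, fromEdgeSet_adj, papillonEdges, Set.mem_ofPred_eq, Nat.min_self] at h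
    try simp only [vNext, vPrev]
    obtain ⟨h, -⟩ := h
    rcases h with ⟨i, hi1, hi2, he⟩ | he | ⟨i, hi1, hi2, he⟩ | ⟨i, hi1, hi2, he⟩ |
      ⟨i, hi1, hi2, hi3, he⟩ | he | he <;>
    rcases Sym2.eq_iff.1 he with ⟨h1, rfl⟩ | ⟨h1, rfl⟩ <;>
    (try split_ifs) <;>
    simp (disch := omega) only [pu_eq_pu_iff, pv_eq_pv_iff, pu_ne_pv, pv_ne_pu,
      ZMod.natCast_eq_natCast_iff_of_lt, false_or, or_false] at h1 ⊢ <;>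
    omega

theorem rightPorts_eq_leftPorts_succ (hj1 : 1 ≤ j) (hjn : j ≠ n) (hj2 : j < 2 * n) :
    rightPorts n j = leftPorts n (j + 1) := by
  rw [rightPorts, leftPorts, vNext, vPrev, if_neg (by omega), if_neg (by omega),
    show 2 * (j + 1) - 1 = 2 * j + 1 by omega, show 2 * (j + 1) - 2 = 2 * j by omega,
    show 2 * (j + 1) - 3 = 2 * j - 1 by omega, show 2 * (j + 1) = 2 * j + 2 by omega,
    Sym2.eq_swap, Sym2.eq_swap (a := pv _ (2 * j - 1))]

theorem Xcut_eq_leftPorts_one_union (hn : 1 ≤ n) :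
    Xcut n = leftPorts n 1 ∪ rightPorts n n := by
  have hu : pu (2 * (n + n)) (2 * 1 - 2) = pu (2 * (n + n)) (4 * n) := by
    simp (disch := omega) only [pu_eq_pu_iff, ZMod.natCast_eq_natCast_iff_of_lt]; omega
  rw [leftPorts, rightPorts, hu, vPrev, vNext, if_pos (by omega), if_pos (by omega),
    show 2 * 1 + 2 * n = 2 * n + 2 by omega, show 2 * n - 1 + 2 * n = 4 * n - 1 by omega]
  ext e
  simp only [Xcut, Set.mem_union, Set.mem_insert_iff, Set.mem_singleton_iff]
  tauto

theorem Xcut_eq_leftPorts_succ_union (hn : 1 ≤ n) :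
    Xcut n = leftPorts n (n + 1) ∪ rightPorts n (2 * n) := by
  have hu : pu (2 * (n + n)) (2 * (2 * n) + 1) = pu (2 * (n + n)) 1 := by
    simp (disch := omega) only [pu_eq_pu_iff, ZMod.natCast_eq_natCast_iff_of_lt]; omega
  have hv1 : vPrev n (n + 1) = pv (2 * (n + n)) 2 := by
    rw [vPrev, if_pos (by omega)]
    simp (disch := omega) only [pv_eq_pv_iff, ZMod.natCast_eq_natCast_iff_of_lt]; omega
  have hv2 : vNext n (2 * n) = pv (2 * (n + n)) (2 * n - 1) := by
    rw [vNext, if_pos (by omega)]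
    simp (disch := omega) only [pv_eq_pv_iff, ZMod.natCast_eq_natCast_iff_of_lt]; omega
  rw [leftPorts, rightPorts, hu, hv1, hv2, show 2 * (n + 1) - 1 = 2 * n + 1 by omega,
    show 2 * (n + 1) - 2 = 2 * n by omega, show 2 * (n + 1) = 2 * n + 2 by omega,
    show 2 * (2 * n) = 4 * n by omega]
  ext e
  simp only [Xcut, Set.mem_union, Set.mem_insert_iff, Set.mem_singleton_iff,
    Sym2.eq_swap (a := pu _ (4 * n)), Sym2.eq_swap (a := pu _ (2 * n + 1)),
    Sym2.eq_swap (a := pv _ (2 * n + 2)), Sym2.eq_swap (a := pv _ (4 * n - 1))]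
  tauto

theorem disjoint_leftPorts_one_rightPorts (hn : 1 ≤ n) :
    Disjoint (leftPorts n 1) (rightPorts n n) := by
  rw [leftPorts, rightPorts, vPrev, vNext, if_pos (by omega), if_pos (by omega)]
  simp (disch := omega) only [Set.disjoint_insert_left, Set.disjoint_singleton_left,
    Set.mem_insert_iff, Set.mem_singleton_iff, Sym2.eq_iff, pu_eq_pu_iff, pv_eq_pv_iff,
    pu_ne_pv, pv_ne_pu, ZMod.natCast_eq_natCast_iff_of_lt, and_false, or_false, not_or,
    not_and_or, not_false_eq_true, true_and]
  omega

theorem disjoint_leftPorts_succ_rightPorts (hn : 1 ≤ n) :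
    Disjoint (leftPorts n (n + 1)) (rightPorts n (2 * n)) := by
  rw [leftPorts, rightPorts, vPrev, vNext, if_pos (by omega), if_pos (by omega)]
  simp (disch := omega) only [Set.disjoint_insert_left, Set.disjoint_singleton_left,
    Set.mem_insert_iff, Set.mem_singleton_iff, Sym2.eq_iff, pu_eq_pu_iff, pv_eq_pv_iff,
    pu_ne_pv, pv_ne_pu, ZMod.natCast_eq_natCast_iff_of_lt, and_false, or_false, not_or,
    not_and_or, not_false_eq_true, true_and]
  omega

variable {M : Set (Sym2 (PapVert (2 * (n + n))))}

theorem ncard_inter_leftPorts_eq_rightPorts (hM : IsPerfMatching (papillon n n) M)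
    (hj1 : 1 ≤ j) (hj2 : j ≤ 2 * n) :
    (M ∩ leftPorts n j).ncard = (M ∩ rightPorts n j).ncard :=
  (isFourPole_papillon hj1 hj2).ncard_inter_left_eq_right hM

theorem ncard_inter_leftPorts_eq_of_le (hM : IsPerfMatching (papillon n n) M) {k : ℕ}
    (hk : 1 ≤ k) (hkj : k ≤ j) (hj : j ≤ 2 * n) (hn : j ≤ n ∨ n < k) :
    (M ∩ leftPorts n j).ncard = (M ∩ leftPorts n k).ncard := by
  induction j, hkj using Nat.le_induction with
  | base => rfl
  | succ i hki ih =>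
    rw [← rightPorts_eq_leftPorts_succ (by omega) (by omega) (by omega),
      ← ncard_inter_leftPorts_eq_rightPorts hM (by omega) (by omega), ih (by omega) (by omega)]

theorem ncard_inter_leftPorts_eq_one (hM : IsPerfMatching (papillon n n) M)
    (hX : (M ∩ Xcut n).ncard = 2) (hj1 : 1 ≤ j) (hj2 : j ≤ 2 * n) :
    (M ∩ leftPorts n j).ncard = 1 := by
  have hn : 1 ≤ n := by omega
  have hsplit : ∀ k m, Xcut n = leftPorts n k ∪ rightPorts n m →
      Disjoint (leftPorts n k) (rightPorts n m) →
      (M ∩ leftPorts n k).ncard + (M ∩ rightPorts n m).ncard = 2 := fun k m hXkm hkm => by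
    rw [← Set.ncard_union_eq (hkm.mono Set.inter_subset_right Set.inter_subset_right)
      (((Set.finite_singleton _).insert _).inter_of_right _)
      (((Set.finite_singleton _).insert _).inter_of_right _),
      ← Set.inter_union_distrib_left, ← hXkm, hX]
  have hfirst : (M ∩ leftPorts n 1).ncard = 1 := by
    have := hsplit 1 n (Xcut_eq_leftPorts_one_union hn) (disjoint_leftPorts_one_rightPorts hn)
    rw [← ncard_inter_leftPorts_eq_rightPorts hM hn (by omega),
      ncard_inter_leftPorts_eq_of_le hM le_rfl hn (by omega) (Or.inl le_rfl)] at this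
    omega
  have hsecond : (M ∩ leftPorts n (n + 1)).ncard = 1 := by
    have := hsplit (n + 1) (2 * n) (Xcut_eq_leftPorts_succ_union hn)
      (disjoint_leftPorts_succ_rightPorts hn)
    rw [← ncard_inter_leftPorts_eq_rightPorts hM (by omega) le_rfl,
      ncard_inter_leftPorts_eq_of_le hM (k := n + 1) (by omega) (by omega) le_rfl
        (Or.inr (by omega))] at this
    omega
  rcases le_or_gt j n with h | h
  · rw [ncard_inter_leftPorts_eq_of_le hM le_rfl hj1 hj2 (Or.inl h), hfirst]
  · rw [ncard_inter_leftPorts_eq_of_le hM (k := n + 1) (by omega) h hj2 (Or.inr (by omega)),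
      hsecond]

end Papillon

theorem statement11_general (n : ℕ) (M : Set (Sym2 (PapVert (2 * (n + n)))))
    (hM : IsPerfMatching (papillon n n) M) (h2 : (M ∩ Xcut n).ncard = 2)
    (j : ℕ) (hj1 : 1 ≤ j) (hj2 : j ≤ 2 * n) :
    (M ∩ boundaryT n j).ncard = 2 ∧
    ¬ ((∃ e ∈ M ∩ boundaryT n j, pu (2 * (n + n)) (2 * j - 1) ∈ e) ∧
       (∃ e ∈ M ∩ boundaryT n j, pv (2 * (n + n)) (2 * j) ∈ e)) ∧
    ¬ ((∃ e ∈ M ∩ boundaryT n j, pu (2 * (n + n)) (2 * j) ∈ e) ∧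
       (∃ e ∈ M ∩ boundaryT n j, pv (2 * (n + n)) (2 * j - 1) ∈ e)) :=
  (isFourPole_papillon hj1 hj2).matching_boundary_of_ncard_inter_left_eq_one hM
    (ncard_inter_leftPorts_eq_one hM h2 hj1 hj2)

/-- If a perfect matching `M` of the balanced papillon graph `P_n` meets the principal
4-edge-cut `X` in exactly two edges, then for every `j ∈ {1, …, 2n}` the set `M ∩ ∂T_j`
consists of exactly two edges, and these two edges are neither the pair consisting of the
edge of `∂T_j` at `u_{2j-1}` together with the edge of `∂T_j` at `v_{2j}`, nor the pair
consisting of the edge of `∂T_j` at `u_{2j}` together with the edge of `∂T_j` at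
`v_{2j-1}`. -/
theorem statement11 (n : ℕ) (hn : 1 ≤ n) (M : Set (Sym2 (PapVert (2 * (n + n)))))
    (hM : IsPerfMatching (papillon n n) M) (h2 : (M ∩ Xcut n).ncard = 2)
    (j : ℕ) (hj1 : 1 ≤ j) (hj2 : j ≤ 2 * n) :
    (M ∩ boundaryT n j).ncard = 2 ∧
    ¬ ((∃ e ∈ M ∩ boundaryT n j, pu (2 * (n + n)) (2 * j - 1) ∈ e) ∧
       (∃ e ∈ M ∩ boundaryT n j, pv (2 * (n + n)) (2 * j) ∈ e)) ∧
    ¬ ((∃ e ∈ M ∩ boundaryT n j, pu (2 * (n + n)) (2 * j) ∈ e) ∧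
       (∃ e ∈ M ∩ boundaryT n j, pv (2 * (n + n)) (2 * j - 1) ∈ e)) :=
  statement11_general n M hM h2 j hj1 hj2
end
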